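/- arXiv:1410.4025 — 4 statements merged into one kernel-verified Lean document; each statement's English description precedes it below -/
import Mathlib

section
/- Let w ∈ W be a basic involution. Then the coadjoint B-orbit Ω_w is the union of the coadjoint U-orbits Θ_{w,ξ}: Ω_w = ⋃_ξ Θ_{w,ξ}, where the union is taken over all maps ξ : Supp(w) → ℂ^×. -/
/-!
The Weyl group of type `Dₙ`, realized as the group of permutations `w` of `ℤ`
supported on `{±1, …, ±n}` with `w (-i) = - w i` and an even number of sign changes.
-/

open Equiv

/-- The simple reflections of type `Dₙ`, indexed by `i ∈ {1, …, n}`: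
`sᵢ = (i, i+1)(-i, -(i+1))` for `1 ≤ i ≤ n - 1`, and
`sₙ = (n-1, -n)(-(n-1), n)`. -/
def simpleRefl (n : ℕ) (i : ℕ) : Equiv.Perm ℤ :=
  if i < n then Equiv.swap (i : ℤ) ((i : ℤ) + 1) * Equiv.swap (-(i : ℤ)) (-((i : ℤ) + 1))
  else Equiv.swap ((n : ℤ) - 1) (-(n : ℤ)) * Equiv.swap (-((n : ℤ) - 1)) (n : ℤ)

/-- A word in the letters `{1, …, n}` (indices of simple reflections). -/
def IsWord (n : ℕ) (L : List ℕ) : Prop := ∀ i ∈ L, 1 ≤ i ∧ i ≤ n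

/-- The product `s_{i₁} ⋯ s_{i_l}` of the word `L = [i₁, …, i_l]`. -/
def wordProd (n : ℕ) (L : List ℕ) : Equiv.Perm ℤ := (L.map (simpleRefl n)).prod

/-- Membership in the Weyl group `W` of type `Dₙ`: a permutation of `ℤ` commuting with
negation, fixing every integer of absolute value `> n`, and with an even number of
`i ∈ {1, …, n}` such that `w i < 0`. -/
def IsD (n : ℕ) (w : Equiv.Perm ℤ) : Prop :=
  (∀ i : ℤ, w (-i) = -(w i)) ∧ (∀ i : ℤ, (n : ℤ) < |i| → w i = i) ∧
    Even (((Finset.Icc (1 : ℤ) (n : ℤ)).filter fun i => w i < 0).card)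

/-- The length `ℓ(w)`: the minimal number of factors in an expression of `w` as a
product of simple reflections. -/
noncomputable def weylLength (n : ℕ) (w : Equiv.Perm ℤ) : ℕ :=
  sInf {l | ∃ L : List ℕ, IsWord n L ∧ L.length = l ∧ wordProd n L = w}

/-- `L` is a reduced decomposition of `w`. -/
def IsReducedWord (n : ℕ) (w : Equiv.Perm ℤ) (L : List ℕ) : Prop :=
  IsWord n L ∧ wordProd n L = w ∧ L.length = weylLength n w

/-- `w` is a basic involution: `w ∈ W`, `w² = id`, and `w i ≠ -i` for all `i ∈ {1, …, n}`. -/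
def IsBasicInvolution (n : ℕ) (w : Equiv.Perm ℤ) : Prop :=
  IsD n w ∧ w * w = 1 ∧ ∀ i : ℤ, 1 ≤ i → i ≤ (n : ℤ) → w i ≠ -i

/-!
The group `SO₂ₙ(ℂ)`, its subgroups `B`, `U`, `T`, and the coadjoint action on `𝔫*`.
Rows and columns of `2n × 2n` matrices are indexed by `1, …, n, -n, …, -1`; the index
`i > 0` labels row `i - 1` (0-based) and the index `-j` labels row `2n - j` (0-based).
-/

/-- `2n × 2n` complex matrices. -/
abbrev Mat (n : ℕ) : Type := Matrix (Fin (2 * n)) (Fin (2 * n)) ℂ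

/-- The matrix `J` with `1`'s on the antidiagonal and `0`'s elsewhere. -/
def antidiagJ (n : ℕ) : Mat n :=
  Matrix.of fun i j => if (i : ℕ) + (j : ℕ) = 2 * n - 1 then 1 else 0

/-- The strictly lower-triangular part of a matrix. -/
def lowPart (n : ℕ) (M : Mat n) : Mat n :=
  Matrix.of fun i j => if (j : ℕ) < (i : ℕ) then M i j else 0

/-- Membership in `SO₂ₙ(ℂ) = {g ∈ SL₂ₙ(ℂ) : gᵀ J g = J}`. -/
def IsSO (n : ℕ) (g : Mat n) : Prop :=
  g.det = 1 ∧ g.transpose * antidiagJ n * g = antidiagJ n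

/-- The Borel subgroup `B`: upper-triangular matrices in `SO₂ₙ(ℂ)`. -/
def Bset (n : ℕ) : Set (Mat n) :=
  {g | IsSO n g ∧ ∀ i j : Fin (2 * n), (j : ℕ) < (i : ℕ) → g i j = 0}

/-- The unipotent radical `U`: upper-triangular matrices in `SO₂ₙ(ℂ)` with `1`'s on
the diagonal. -/
def Uset (n : ℕ) : Set (Mat n) := {g | g ∈ Bset n ∧ ∀ i, g i i = 1}

/-- The maximal torus `T`: diagonal matrices in `SO₂ₙ(ℂ)`. -/
def Tset (n : ℕ) : Set (Mat n) := {g | IsSO n g ∧ ∀ i j, i ≠ j → g i j = 0}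

/-- The coadjoint action `b.λ = (b λ b⁻¹)_low`. -/
noncomputable def coad (n : ℕ) (b lam : Mat n) : Mat n := lowPart n (b * lam * b⁻¹)

/-- The support of an involution `w`, encoded as triples: `(i, j, false)` stands for the
root `ε_{i+1} - ε_{j+1}` (so `w (i+1) = j+1`), `(i, j, true)` for `ε_{i+1} + ε_{j+1}`
(so `w (i+1) = -(j+1)`); here `i < j` as elements of `Fin n` (0-based indexing). -/
def suppFinset (n : ℕ) (w : Equiv.Perm ℤ) : Finset (Fin n × Fin n × Bool) :=
  Finset.univ.filter fun r =>
    r.1 < r.2.1 ∧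
      ((r.2.2 = false ∧ w (((r.1 : ℕ) : ℤ) + 1) = ((r.2.1 : ℕ) : ℤ) + 1) ∨
       (r.2.2 = true ∧ w (((r.1 : ℕ) : ℤ) + 1) = -(((r.2.1 : ℕ) : ℤ) + 1)))

/-- The basis vector `e_β*` of `𝔫*`: for `β = ε_i - ε_j` (1-based `i < j`),
`e_β* = E_{j,i} - E_{-i,-j}`; for `β = ε_i + ε_j`, `e_β* = E_{-j,i} - E_{-i,j}`. -/
def eStar (n : ℕ) (r : Fin n × Fin n × Bool) : Mat n :=
  if r.2.2 then
    Matrix.single ⟨2 * n - 1 - (r.2.1 : ℕ), by have := r.2.1.isLt; omega⟩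
        ⟨(r.1 : ℕ), by have := r.1.isLt; omega⟩ 1
      - Matrix.single ⟨2 * n - 1 - (r.1 : ℕ), by have := r.1.isLt; omega⟩
        ⟨(r.2.1 : ℕ), by have := r.2.1.isLt; omega⟩ 1
  else
    Matrix.single ⟨(r.2.1 : ℕ), by have := r.2.1.isLt; omega⟩
        ⟨(r.1 : ℕ), by have := r.1.isLt; omega⟩ 1
      - Matrix.single ⟨2 * n - 1 - (r.1 : ℕ), by have := r.1.isLt; omega⟩
        ⟨2 * n - 1 - (r.2.1 : ℕ), by have := r.2.1.isLt; omega⟩ 1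

/-- The linear form `f_{w,ξ} = ∑_{β ∈ Supp(w)} ξ(β) e_β*`. -/
noncomputable def fwxi (n : ℕ) (w : Equiv.Perm ℤ) (xi : Fin n × Fin n × Bool → ℂˣ) : Mat n :=
  ∑ r ∈ suppFinset n w, ((xi r : ℂ) • eStar n r)

/-- The linear form `f_w = ∑_{β ∈ Supp(w)} e_β*`. -/
noncomputable def fw (n : ℕ) (w : Equiv.Perm ℤ) : Mat n := ∑ r ∈ suppFinset n w, eStar n r

/-- The coadjoint `B`-orbit `Ω_w` of `f_w`. -/
def OmegaSet (n : ℕ) (w : Equiv.Perm ℤ) : Set (Mat n) :=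
  {m | ∃ b ∈ Bset n, m = coad n b (fw n w)}

/-- The coadjoint `U`-orbit `Θ_{w,ξ}` of `f_{w,ξ}`. -/
def ThetaSet (n : ℕ) (w : Equiv.Perm ℤ) (xi : Fin n × Fin n × Bool → ℂˣ) : Set (Mat n) :=
  {m | ∃ u ∈ Uset n, m = coad n u (fwxi n w xi)}

/-!
`B = U ⋊ T`, and the torus acts on `𝔫*` diagonally: `t.e_β* = β(t) e_β*`. Hence
`B.f_w = ⋃_{t ∈ T} U.(t.f_w)` with `t.f_w = f_{w, β ↦ β(t)}`. Conversely, since `w` is an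
involution the roots of `Supp(w)` involve pairwise distinct indices, so the characters
`β(t)`, `β ∈ Supp(w)`, can be prescribed arbitrarily, and every `f_{w,ξ}` lies in `T.f_w`.
-/
section Orthogonal

open scoped Matrix

variable {n : ℕ}

lemma antidiagJ_apply (i j : Fin (2 * n)) : antidiagJ n i j = if i = j.rev then 1 else 0 := by
  simp only [antidiagJ, Matrix.of_apply, Fin.ext_iff, Fin.val_rev]
  congr 1
  apply propext
  omega

lemma IsSO.mul {a b : Mat n} (ha : IsSO n a) (hb : IsSO n b) : IsSO n (a * b) := by
  refine ⟨by rw [Matrix.det_mul, ha.1, hb.1, one_mul], ?_⟩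
  calc (a * b)ᵀ * antidiagJ n * (a * b) = bᵀ * (aᵀ * antidiagJ n * a) * b := by
        simp only [Matrix.transpose_mul, mul_assoc]
    _ = antidiagJ n := by rw [ha.2, hb.2]

lemma isSO_diagonal {d : Fin (2 * n) → ℂ} (hd : ∀ a, d a * d a.rev = 1) :
    IsSO n (Matrix.diagonal d) := by
  refine ⟨?_, ?_⟩
  · rw [Matrix.det_diagonal]
    exact Finset.prod_involution (fun a _ => a.rev) (fun a _ => hd a)
      (fun a _ _ => by rw [Ne, Fin.ext_iff, Fin.val_rev]; omega) (fun a _ => Finset.mem_univ _)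
      (fun a _ => Fin.rev_rev a)
  · ext i j
    simp only [Matrix.diagonal_transpose, Matrix.mul_diagonal, Matrix.diagonal_mul,
      antidiagJ_apply]
    split_ifs with h
    · rw [h, mul_one, mul_comm]
      exact hd j
    · simp

lemma transpose_mul_antidiagJ_mul_apply (g : Mat n) (x y : Fin (2 * n)) :
    (gᵀ * antidiagJ n * g) x y = ∑ k, g k.rev x * g k y := by
  simp only [Matrix.mul_apply, Matrix.transpose_apply, antidiagJ_apply, mul_ite, mul_one,
    mul_zero, Finset.sum_ite_eq', Finset.mem_univ, if_true]

lemma diag_mul_diag_rev_of_mem_Bset {g : Mat n} (hg : g ∈ Bset n) (i : Fin (2 * n)) :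
    g i i * g i.rev i.rev = 1 := by
  obtain ⟨⟨-, hJ⟩, hup⟩ := hg
  have h := congr_fun (congr_fun hJ i) i.rev
  rw [transpose_mul_antidiagJ_mul_apply, antidiagJ_apply, Fin.rev_rev, if_pos rfl,
    Finset.sum_eq_single i.rev] at h
  · simpa only [Fin.rev_rev] using h
  · intro k _ hk
    rcases lt_or_gt_of_ne hk with hlt | hgt
    · rw [hup k.rev i (by rw [Fin.lt_def, Fin.val_rev] at *; omega), zero_mul]
    · rw [hup k i.rev hgt, mul_zero]
  · exact fun h => absurd (Finset.mem_univ _) h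

lemma mul_mem_Bset {a b : Mat n} (ha : a ∈ Bset n) (hb : b ∈ Bset n) :
    a * b ∈ Bset n :=
  ⟨ha.1.mul hb.1, Matrix.BlockTriangular.mul (b := id) ha.2 hb.2⟩

end Orthogonal

section Torus

variable {n : ℕ}

/-- The index `a + 1 ∈ {1, …, n}` as a row of a `2n × 2n` matrix; its reverse is the index
`-(a + 1)`. -/
def posIdx (a : Fin n) : Fin (2 * n) := Fin.castLE (by omega) a

lemma exists_posIdx_or_rev (b : Fin (2 * n)) :
    ∃ a : Fin n, b = posIdx a ∨ b = (posIdx a).rev := by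
  rcases lt_or_ge (b : ℕ) n with h | h
  · exact ⟨⟨b, h⟩, Or.inl rfl⟩
  · refine ⟨⟨b.rev, by rw [Fin.val_rev]; omega⟩, Or.inr ?_⟩
    ext
    simp only [posIdx, Fin.val_rev, Fin.val_castLE]
    omega

/-- The diagonal of the torus element `diag(t₁, …, tₙ, tₙ⁻¹, …, t₁⁻¹)`. -/
def torusEntry (t : Fin n → ℂˣ) (b : Fin (2 * n)) : ℂˣ :=
  if h : (b : ℕ) < n then t ⟨b, h⟩ else (t ⟨b.rev, by rw [Fin.val_rev]; omega⟩)⁻¹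

noncomputable def torus (t : Fin n → ℂˣ) : Mat n :=
  Matrix.diagonal fun b => (torusEntry t b : ℂ)

/-- The character `β ↦ t^β` of the torus on the root `β` encoded by `r`
(`ε_i - ε_j` for `r = (i, j, false)`, `ε_i + ε_j` for `r = (i, j, true)`). -/
def rootChar (t : Fin n → ℂˣ) (r : Fin n × Fin n × Bool) : ℂˣ :=
  if r.2.2 then (t r.1 * t r.2.1)⁻¹ else t r.2.1 * (t r.1)⁻¹

@[simp]
lemma torusEntry_posIdx (t : Fin n → ℂˣ) (a : Fin n) : torusEntry t (posIdx a) = t a := by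
  simp [torusEntry, posIdx]

@[simp]
lemma torusEntry_rev_posIdx (t : Fin n → ℂˣ) (a : Fin n) :
    torusEntry t (posIdx a).rev = (t a)⁻¹ := by
  have ha := a.isLt
  rw [torusEntry, dif_neg (by simp only [posIdx, Fin.val_rev, Fin.val_castLE]; omega)]
  congr 2
  ext
  simp only [posIdx, Fin.val_rev, Fin.val_castLE]
  omega

lemma torusEntry_rev (t : Fin n → ℂˣ) (b : Fin (2 * n)) :
    torusEntry t b.rev = (torusEntry t b)⁻¹ := by
  obtain ⟨a, rfl | rfl⟩ := exists_posIdx_or_rev b <;> simp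

@[simp]
lemma torusEntry_inv (t : Fin n → ℂˣ) (b : Fin (2 * n)) :
    torusEntry t⁻¹ b = (torusEntry t b)⁻¹ := by
  unfold torusEntry
  split_ifs <;> rfl

lemma torus_mul_torus_inv (t : Fin n → ℂˣ) : torus t * torus t⁻¹ = 1 := by
  simp [torus, Matrix.diagonal_mul_diagonal]

lemma torus_inv_mul_torus (t : Fin n → ℂˣ) : torus t⁻¹ * torus t = 1 := by
  simpa using torus_mul_torus_inv t⁻¹

lemma inv_torus (t : Fin n → ℂˣ) : (torus t)⁻¹ = torus t⁻¹ :=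
  Matrix.inv_eq_right_inv (torus_mul_torus_inv t)

lemma torus_mem_Bset (t : Fin n → ℂˣ) : torus t ∈ Bset n :=
  ⟨isSO_diagonal fun a => by simp [torusEntry_rev], Matrix.blockTriangular_diagonal _⟩

lemma exists_eq_mul_torus_of_mem_Bset {b : Mat n} (hb : b ∈ Bset n) :
    ∃ u ∈ Uset n, ∃ t : Fin n → ℂˣ, b = u * torus t := by
  have hdiag := diag_mul_diag_rev_of_mem_Bset hb
  have hne (i : Fin (2 * n)) : b i i ≠ 0 := left_ne_zero_of_mul_eq_one (hdiag i)
  set t : Fin n → ℂˣ := fun a => Units.mk0 _ (hne (posIdx a))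
  have ht (i : Fin (2 * n)) : (torusEntry t i : ℂ) = b i i := by
    obtain ⟨a, rfl | rfl⟩ := exists_posIdx_or_rev i
    · simp [t]
    · simpa [t] using inv_eq_of_mul_eq_one_right (hdiag (posIdx a))
  refine ⟨b * torus t⁻¹, ⟨mul_mem_Bset hb (torus_mem_Bset _), fun i => ?_⟩, t, ?_⟩
  · simp [torus, Matrix.mul_diagonal, ht, hne]
  · rw [mul_assoc, torus_inv_mul_torus, mul_one]

end Torus

lemma diagonal_mul_single_mul_diagonal {ι α : Type*} [Fintype ι] [DecidableEq ι] [Semiring α]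
    (d e : ι → α) (a c : ι) (v : α) :
    Matrix.diagonal d * Matrix.single a c v * Matrix.diagonal e =
      Matrix.single a c (d a * v * e c) := by
  ext i j
  simp only [Matrix.mul_diagonal, Matrix.diagonal_mul, Matrix.single_apply]
  split_ifs with h
  · rw [h.1, h.2]
  · simp

section Conjugation

variable {n : ℕ}

lemma rev_posIdx (a : Fin n) : (posIdx a).rev = ⟨2 * n - 1 - a, by omega⟩ :=
  Fin.ext (by simp only [posIdx, Fin.val_rev, Fin.val_castLE]; omega)

lemma eStar_false (i j : Fin n) :
    eStar n (i, j, false) =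
      Matrix.single (posIdx j) (posIdx i) 1 - Matrix.single (posIdx i).rev (posIdx j).rev 1 := by
  simp only [eStar, Bool.false_eq_true, if_false, rev_posIdx]
  rfl

lemma eStar_true (i j : Fin n) :
    eStar n (i, j, true) =
      Matrix.single (posIdx j).rev (posIdx i) 1 - Matrix.single (posIdx i).rev (posIdx j) 1 := by
  simp only [eStar, if_true, rev_posIdx]
  rfl

lemma torus_mul_eStar_mul_inv_torus (t : Fin n → ℂˣ) (r : Fin n × Fin n × Bool) :
    torus t * eStar n r * (torus t)⁻¹ = (rootChar t r : ℂ) • eStar n r := by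
  rw [inv_torus]
  obtain ⟨i, j, _ | _⟩ := r <;>
    simp only [eStar_false, eStar_true, torus, mul_sub, sub_mul,
      diagonal_mul_single_mul_diagonal, rootChar, smul_sub, Matrix.smul_single] <;>
    simp [mul_comm]

lemma torus_mul_fw_mul_inv_torus (w : Equiv.Perm ℤ) (t : Fin n → ℂˣ) :
    torus t * fw n w * (torus t)⁻¹ = fwxi n w (rootChar t) := by
  simp only [fw, fwxi, Finset.mul_sum, Finset.sum_mul, torus_mul_eStar_mul_inv_torus]

lemma coad_mul_torus (w : Equiv.Perm ℤ) (u : Mat n) (t : Fin n → ℂˣ) :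
    coad n (u * torus t) (fw n w) = coad n u (fwxi n w (rootChar t)) := by
  rw [coad, coad, Matrix.mul_inv_rev, ← torus_mul_fw_mul_inv_torus]
  simp only [mul_assoc]

end Conjugation

lemma exists_rootChar_eq {n : ℕ} {S : Finset (Fin n × Fin n × Bool)}
    (hsnd : Set.InjOn (fun r : Fin n × Fin n × Bool => r.2.1) S)
    (hfst : ∀ r ∈ S, ∀ r' ∈ S, r.1 ≠ r'.2.1)
    (ξ : Fin n × Fin n × Bool → ℂˣ) : ∃ t : Fin n → ℂˣ, ∀ r ∈ S, rootChar t r = ξ r := by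
  classical
  -- `t_j` is `ξ β` or `(ξ β)⁻¹` for the unique `β ∈ S` with larger index `j`, and `1` if there
  -- is none; then `t_i = 1` for the smaller index `i` of every `β ∈ S`.
  set c : Fin n × Fin n × Bool → ℂˣ := fun r => if r.2.2 then (ξ r)⁻¹ else ξ r
  refine ⟨fun a => ∏ r ∈ S with r.2.1 = a, c r, fun r hr => ?_⟩
  have h₁ : ∏ r' ∈ S with r'.2.1 = r.1, c r' = 1 := Finset.prod_eq_one fun r' hr' =>
    absurd (Finset.mem_filter.1 hr').2.symm (hfst r hr r' (Finset.mem_filter.1 hr').1)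
  have h₂ : ∏ r' ∈ S with r'.2.1 = r.2.1, c r' = c r :=
    Finset.prod_eq_single_of_mem r (Finset.mem_filter.2 ⟨hr, rfl⟩) fun r' hr' hne =>
      absurd (hsnd (Finset.mem_filter.1 hr').1 hr (Finset.mem_filter.1 hr').2) hne
  obtain ⟨i, j, _ | _⟩ := r <;> simp [rootChar, h₁, h₂, c]

section Support

variable {n : ℕ} {w : Equiv.Perm ℤ}

lemma apply_fst_of_mem_suppFinset {r : Fin n × Fin n × Bool} (hr : r ∈ suppFinset n w) :
    r.1 < r.2.1 ∧ w (((r.1 : ℕ) : ℤ) + 1) =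
      if r.2.2 then -(((r.2.1 : ℕ) : ℤ) + 1) else ((r.2.1 : ℕ) : ℤ) + 1 := by
  obtain ⟨i, j, _ | _⟩ := r <;> simp_all [suppFinset]

lemma apply_snd_of_mem_suppFinset (hinv : w * w = 1) (hodd : ∀ i, w (-i) = -(w i))
    {r : Fin n × Fin n × Bool} (hr : r ∈ suppFinset n w) :
    w (((r.2.1 : ℕ) : ℤ) + 1) =
      if r.2.2 then -(((r.1 : ℕ) : ℤ) + 1) else ((r.1 : ℕ) : ℤ) + 1 := by
  have hww (x : ℤ) : w (w x) = x := by simpa using Equiv.ext_iff.1 hinv x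
  obtain ⟨-, h⟩ := apply_fst_of_mem_suppFinset hr
  obtain ⟨i, j, _ | _⟩ := r
  · simp only [if_false, Bool.false_eq_true] at h ⊢
    rw [← h, hww]
  · simp only [if_true] at h ⊢
    rw [← neg_neg (((j : ℕ) : ℤ) + 1), hodd, ← h, hww]

lemma injOn_snd_suppFinset (hinv : w * w = 1) (hodd : ∀ i, w (-i) = -(w i)) :
    Set.InjOn (fun r => r.2.1) (suppFinset n w : Set (Fin n × Fin n × Bool)) := by
  rintro ⟨i, j, b⟩ hr ⟨i', j', b'⟩ hr' (rfl : j = j')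
  have h := apply_snd_of_mem_suppFinset hinv hodd hr
  have h' := apply_snd_of_mem_suppFinset hinv hodd hr'
  simp only at h h'
  cases b <;> cases b' <;> simp only [if_true, if_false, Bool.false_eq_true] at h h' <;>
    first | omega | (simp only [Prod.mk.injEq, and_true]; omega)

lemma fst_ne_snd_of_mem_suppFinset (hinv : w * w = 1) (hodd : ∀ i, w (-i) = -(w i))
    {r r' : Fin n × Fin n × Bool} (hr : r ∈ suppFinset n w) (hr' : r' ∈ suppFinset n w) :
    r.1 ≠ r'.2.1 := by
  intro h
  obtain ⟨hlt, hr⟩ := apply_fst_of_mem_suppFinset hr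
  obtain ⟨hlt', -⟩ := apply_fst_of_mem_suppFinset hr'
  have hr' := apply_snd_of_mem_suppFinset hinv hodd hr'
  rw [← h] at hr' hlt'
  rw [Fin.lt_def] at hlt hlt'
  split_ifs at hr hr' <;> omega

end Support

lemma fwxi_congr {n : ℕ} {w : Equiv.Perm ℤ} {ξ ξ' : Fin n × Fin n × Bool → ℂˣ}
    (h : ∀ r ∈ suppFinset n w, ξ r = ξ' r) : fwxi n w ξ = fwxi n w ξ' :=
  Finset.sum_congr rfl fun r hr => by rw [h r hr]

theorem statement6_general (n : ℕ) (w : Equiv.Perm ℤ)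
    (hw : IsBasicInvolution n w) :
    OmegaSet n w = ⋃ xi : Fin n × Fin n × Bool → ℂˣ, ThetaSet n w xi := by
  obtain ⟨⟨hodd, -, -⟩, hinv, -⟩ := hw
  ext m
  simp only [Set.mem_iUnion]
  constructor
  · rintro ⟨b, hb, rfl⟩
    obtain ⟨u, hu, t, rfl⟩ := exists_eq_mul_torus_of_mem_Bset hb
    exact ⟨rootChar t, u, hu, coad_mul_torus w u t⟩
  · rintro ⟨ξ, u, hu, rfl⟩
    obtain ⟨t, ht⟩ := exists_rootChar_eq (injOn_snd_suppFinset hinv hodd)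
      (fun r hr r' hr' => fst_ne_snd_of_mem_suppFinset hinv hodd hr hr') ξ
    refine ⟨u * torus t, mul_mem_Bset hu.1 (torus_mem_Bset t), ?_⟩
    rw [coad_mul_torus, fwxi_congr ht]

/-- Let `w` be a basic involution in the Weyl group of type `Dₙ`,
`n ≥ 4`. Then the coadjoint `B`-orbit `Ω_w` is the union of the coadjoint `U`-orbits
`Θ_{w,ξ}` over all maps `ξ : Supp(w) → ℂˣ`. -/
theorem statement6 (n : ℕ) (hn : 4 ≤ n) (w : Equiv.Perm ℤ)
    (hw : IsBasicInvolution n w) :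
    OmegaSet n w = ⋃ xi : Fin n × Fin n × Bool → ℂˣ, ThetaSet n w xi :=
  statement6_general n w hw
end

section
/- Let w ∈ W be a basic involution and let ξ_1, ξ_2 : Supp(w) → ℂ^× be two distinct maps. Then the coadjoint U-orbits Θ_{w,ξ_1} and Θ_{w,ξ_2} are distinct sets: Θ_{w,ξ_1} ≠ Θ_{w,ξ_2}. -/
/-!
The Weyl group of type `Dₙ`, realized as the group of permutations `w` of `ℤ`
supported on `{±1, …, ±n}` with `w (-i) = - w i` and an even number of sign changes.
-/

open Equiv

/-!
`f_{w,ξ}` is a strictly lower-triangular rook matrix: its nonzero entries `±ξ(β)` sit in cells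
that depend only on `w`, at most one in each row and each column. Suppose `f = (u g u⁻¹)_low` for
two such matrices `f, g` on the same cells and a unitriangular `u`. For a cell `(a, b)` below the
diagonal, the minor of `f` on the rooks south-west of `(a, b)` is the corresponding minor of `g`
multiplied on both sides by unitriangular minors of `u` and `u⁻¹`, so the products of the rook
entries of `f` and of `g` in that corner agree. Taking for `(a, b)` the rook in the lowest row
where `f` and `g` differ, all other rooks of the corner lie in lower rows, where `f` and `g`
agree; hence they agree at `(a, b)` as well. So `f = g`, and reading off the rook entries gives
`ξ₁ = ξ₂`.
-/

namespace Matrix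

variable {ι R : Type*} [CommRing R]

theorem det_eq_prod_diag_of_blockTriangular_of_injective [Fintype ι] [DecidableEq ι] {α : Type*}
    [LinearOrder α] {M : Matrix ι ι R} {b : ι → α} (hM : M.BlockTriangular b)
    (hb : Function.Injective b) : M.det = ∏ i, M i i := by
  let _ : LinearOrder ι := LinearOrder.lift' b hb
  exact det_of_isUpperTriangular hM

theorem submatrix_fst_snd_eq_diagonal [DecidableEq ι] {S T : Finset (ι × ι)} {f : Matrix ι ι R}
    (hrow : Set.InjOn Prod.fst (S : Set (ι × ι))) (hcol : Set.InjOn Prod.snd (S : Set (ι × ι)))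
    (hf : ∀ i j, (i, j) ∉ S → f i j = 0) (hTS : T ⊆ S) :
    f.submatrix (fun p : T => p.1.1) (fun p : T => p.1.2) =
      diagonal fun p : T => f p.1.1 p.1.2 := by
  ext p q
  by_cases hpq : p = q
  · subst hpq; simp
  rw [submatrix_apply, diagonal_apply_ne _ hpq]
  by_contra hne
  have hmem : (p.1.1, q.1.2) ∈ S := not_not.1 fun h => hne (hf _ _ h)
  have hp : (p.1.1, q.1.2) = p.1 := hrow hmem (hTS p.2) rfl
  exact hpq (Subtype.ext (hcol (hTS p.2) (hTS q.2) (congrArg Prod.snd hp).symm))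

variable [Fintype ι]

theorem mul_mul_apply_eq_sum_of_support {A B C : Matrix ι ι R} {i j : ι} (T : Finset (ι × ι))
    (hT : ∀ x y, A i x * B x y * C y j ≠ 0 → (x, y) ∈ T) :
    (A * B * C) i j = ∑ p ∈ T, A i p.1 * B p.1 p.2 * C p.2 j := by
  have hsum : (A * B * C) i j = ∑ p : ι × ι, A i p.1 * B p.1 p.2 * C p.2 j := by
    simp only [mul_apply, Finset.sum_mul, Fintype.sum_prod_type]
    exact Finset.sum_comm
  rw [hsum]
  exact (Finset.sum_subset (Finset.subset_univ T) fun p _ hp =>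
    not_not.1 fun h => hp (hT _ _ h)).symm

variable [LinearOrder ι]

theorem IsUpperTriangular.mul_apply_self {A B : Matrix ι ι R} (hA : A.IsUpperTriangular)
    (hB : B.IsUpperTriangular) (i : ι) : (A * B) i i = A i i * B i i := by
  rw [mul_apply, Finset.sum_eq_single i]
  · intro k _ hki
    rcases hki.lt_or_gt with hlt | hlt
    · rw [hA hlt, zero_mul]
    · rw [hB hlt, mul_zero]
  · simp

theorem IsUpperTriangular.inv_of_diag_eq_one {u : Matrix ι ι R} (hu : u.IsUpperTriangular)
    (hu1 : ∀ i, u i i = 1) : u⁻¹.IsUpperTriangular ∧ ∀ i, u⁻¹ i i = 1 := by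
  have hdet : IsUnit u.det := by simp [det_of_isUpperTriangular hu, hu1]
  have : Invertible u := u.invertibleOfIsUnitDet hdet
  have hinv : u⁻¹.IsUpperTriangular := blockTriangular_inv_of_blockTriangular hu
  refine ⟨hinv, fun i => ?_⟩
  simpa [hu1, mul_nonsing_inv u hdet] using (hu.mul_apply_self hinv i).symm

variable {S : Finset (ι × ι)} {f g u v : Matrix ι ι R}
  (hrow : Set.InjOn Prod.fst (S : Set (ι × ι))) (hcol : Set.InjOn Prod.snd (S : Set (ι × ι)))
  (hf : ∀ i j, (i, j) ∉ S → f i j = 0) (hg : ∀ i j, (i, j) ∉ S → g i j = 0)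
  (hu : u.IsUpperTriangular) (hu1 : ∀ i, u i i = 1)
  (hv : v.IsUpperTriangular) (hv1 : ∀ i, v i i = 1)
  (h : ∀ i j, j < i → f i j = (u * g * v) i j)
include hrow hcol hf hg hu hu1 hv hv1 h

theorem prod_southwest_eq {a b : ι} (hab : b < a) :
    ∏ p ∈ S with a ≤ p.1 ∧ p.2 ≤ b, f p.1 p.2 = ∏ p ∈ S with a ≤ p.1 ∧ p.2 ≤ b, g p.1 p.2 := by
  set T := S.filter fun p => a ≤ p.1 ∧ p.2 ≤ b
  have hTS : T ⊆ S := Finset.filter_subset _ _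
  have hTrow : Function.Injective fun p : T => p.1.1 := fun p q hpq =>
    Subtype.ext (hrow (hTS p.2) (hTS q.2) hpq)
  have hTcol : Function.Injective fun p : T => p.1.2 := fun p q hpq =>
    Subtype.ext (hcol (hTS p.2) (hTS q.2) hpq)
  have hminor : f.submatrix (fun p : T => p.1.1) (fun p : T => p.1.2) =
      u.submatrix (fun p : T => p.1.1) (fun p : T => p.1.1) *
        diagonal (fun p : T => g p.1.1 p.1.2) *
        v.submatrix (fun p : T => p.1.2) (fun p : T => p.1.2) := by
    ext p q
    have hp := (Finset.mem_filter.1 p.2).2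
    have hq := (Finset.mem_filter.1 q.2).2
    rw [submatrix_apply, h _ _ (hq.2.trans_lt (hab.trans_le hp.1)),
      mul_mul_apply_eq_sum_of_support T, mul_apply, ← Finset.sum_coe_sort T]
    · simp [mul_diagonal]
    intro x y hxy
    refine Finset.mem_filter.2 ⟨not_not.1 fun hS => hxy (by simp [hg x y hS]), ?_, ?_⟩
    · exact hp.1.trans (not_lt.1 fun hx => hxy (by simp [hu hx]))
    · exact (not_lt.1 fun hy => hxy (by simp [hv hy])).trans hq.2
  have hdet := congrArg det hminor
  rw [submatrix_fst_snd_eq_diagonal hrow hcol hf hTS, det_mul, det_mul, det_diagonal, det_diagonal,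
    det_eq_prod_diag_of_blockTriangular_of_injective (hu.submatrix) hTrow,
    det_eq_prod_diag_of_blockTriangular_of_injective (hv.submatrix) hTcol] at hdet
  simpa [hu1, hv1, Finset.prod_attach T (fun p : ι × ι => f p.1 p.2),
    Finset.prod_attach T (fun p : ι × ι => g p.1 p.2)] using hdet

theorem eq_of_strictLower_eq_mul_mul [IsDomain R] (hlt : ∀ p ∈ S, p.2 < p.1)
    (hg0 : ∀ p ∈ S, g p.1 p.2 ≠ 0) : f = g := by
  classical
  set D := S.filter fun p => f p.1 p.2 ≠ g p.1 p.2
  suffices hD : D = ∅ by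
    ext i j
    by_cases hij : (i, j) ∈ S
    · exact not_not.1 fun hne => (Finset.filter_eq_empty_iff.1 hD) hij hne
    · rw [hf i j hij, hg i j hij]
  by_contra hD
  obtain ⟨p₀, hp₀D, hp₀max⟩ :=
    D.exists_max_image Prod.fst (Finset.nonempty_iff_ne_empty.2 hD)
  obtain ⟨hp₀S, hp₀ne⟩ := Finset.mem_filter.1 hp₀D
  have hprod := prod_southwest_eq hrow hcol hf hg hu hu1 hv hv1 h (hlt p₀ hp₀S)
  set T := S.filter fun p => p₀.1 ≤ p.1 ∧ p.2 ≤ p₀.2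
  have hp₀T : p₀ ∈ T := Finset.mem_filter.2 ⟨hp₀S, le_rfl, le_rfl⟩
  have hrest : ∏ p ∈ T.erase p₀, f p.1 p.2 = ∏ p ∈ T.erase p₀, g p.1 p.2 := by
    refine Finset.prod_congr rfl fun p hp => not_not.1 fun hne => ?_
    obtain ⟨hpp₀, hpT⟩ := Finset.mem_erase.1 hp
    obtain ⟨hpS, hp₀p, -⟩ := Finset.mem_filter.1 hpT
    exact hpp₀ (hrow hpS hp₀S
      ((hp₀max p (Finset.mem_filter.2 ⟨hpS, hne⟩)).antisymm hp₀p))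
  rw [← Finset.mul_prod_erase T _ hp₀T, ← Finset.mul_prod_erase T _ hp₀T, hrest] at hprod
  refine hp₀ne (mul_right_cancel₀ ?_ hprod)
  exact Finset.prod_ne_zero_iff.2 fun p hp =>
    hg0 p (Finset.filter_subset _ _ (Finset.mem_of_mem_erase hp))

end Matrix

section Rooks

open Finset Matrix

/-- A nonzero cell of some `e_β*`: the root `β` (encoded as in `suppFinset`) and which of the two
matrix units of `e_β*` is meant (`false`: the first, `true`: the second). -/
abbrev Rook (n : ℕ) := (Fin n × Fin n × Bool) × Bool

def rookRow (n : ℕ) (k : Rook n) : Fin (2 * n) :=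
  if k.2 then ⟨2 * n - 1 - (k.1.1 : ℕ), by have := k.1.1.isLt; omega⟩
  else if k.1.2.2 then ⟨2 * n - 1 - (k.1.2.1 : ℕ), by have := k.1.2.1.isLt; omega⟩
  else ⟨(k.1.2.1 : ℕ), by have := k.1.2.1.isLt; omega⟩

def rookCol (n : ℕ) (k : Rook n) : Fin (2 * n) :=
  if k.2 then
    (if k.1.2.2 then ⟨(k.1.2.1 : ℕ), by have := k.1.2.1.isLt; omega⟩
     else ⟨2 * n - 1 - (k.1.2.1 : ℕ), by have := k.1.2.1.isLt; omega⟩)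
  else ⟨(k.1.1 : ℕ), by have := k.1.1.isLt; omega⟩

def rookSign {n : ℕ} (k : Rook n) : ℂ := if k.2 then -1 else 1

def rookSet (n : ℕ) (w : Equiv.Perm ℤ) : Finset (Fin (2 * n) × Fin (2 * n)) :=
  (suppFinset n w ×ˢ univ).image fun k => (rookRow n k, rookCol n k)

lemma eStar_eq_single_sub_single (n : ℕ) (r : Fin n × Fin n × Bool) :
    eStar n r = single (rookRow n (r, false)) (rookCol n (r, false)) 1
      - single (rookRow n (r, true)) (rookCol n (r, true)) 1 := by
  obtain ⟨i, j, _ | _⟩ := r <;> rfl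

lemma fwxi_eq_sum_single (n : ℕ) (w : Equiv.Perm ℤ) (xi : Fin n × Fin n × Bool → ℂˣ) :
    fwxi n w xi = ∑ k ∈ suppFinset n w ×ˢ univ,
      single (rookRow n k) (rookCol n k) (rookSign k * xi k.1) := by
  rw [fwxi, sum_product]
  refine sum_congr rfl fun r _ => ?_
  simp [eStar_eq_single_sub_single, rookSign, sub_eq_add_neg, single_neg, add_comm]

lemma fwxi_apply_of_notMem_rookSet {n : ℕ} {w : Equiv.Perm ℤ} (xi : Fin n × Fin n × Bool → ℂˣ)
    {a b : Fin (2 * n)} (hab : (a, b) ∉ rookSet n w) : fwxi n w xi a b = 0 := by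
  rw [fwxi_eq_sum_single, Matrix.sum_apply]
  refine sum_eq_zero fun k hk => single_apply_of_ne _ _ _ _ _ fun h => hab ?_
  exact mem_image.2 ⟨k, hk, by rw [h.1, h.2]⟩

variable {n : ℕ} {w : Equiv.Perm ℤ} (hww : ∀ x, w (w x) = x) (hodd : ∀ x, w (-x) = -w x)
include hww hodd

lemma of_mem_suppFinset {r : Fin n × Fin n × Bool} (hr : r ∈ suppFinset n w) :
    (r.1 : ℕ) < r.2.1 ∧
      w ((r.1 : ℕ) + 1) = (if r.2.2 then -1 else 1) * ((r.2.1 : ℕ) + 1) ∧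
      w ((r.2.1 : ℕ) + 1) = (if r.2.2 then -1 else 1) * ((r.1 : ℕ) + 1) := by
  simp only [suppFinset, mem_filter, mem_univ, true_and] at hr
  obtain ⟨hlt, ⟨ht, h⟩ | ⟨ht, h⟩⟩ := hr
  · simp only [ht]; refine ⟨hlt, by simpa using h, by rw [← h, hww]; simp⟩
  · simp only [ht]; refine ⟨hlt, by simpa using h, ?_⟩
    rw [← neg_neg (((r.2.1 : ℕ) : ℤ) + 1), ← h, hodd, hww]; simp

lemma rookRow_injOn : Set.InjOn (rookRow n) ↑(suppFinset n w ×ˢ (univ : Finset Bool)) := by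
  rintro ⟨⟨⟨i, hi⟩, ⟨j, hj⟩, t⟩, s⟩ hk ⟨⟨⟨i', hi'⟩, ⟨j', hj'⟩, t'⟩, s'⟩ hk' h
  obtain ⟨hij, hwi, hwj⟩ := of_mem_suppFinset hww hodd (mem_product.1 hk).1
  obtain ⟨hij', hwi', hwj'⟩ := of_mem_suppFinset hww hodd (mem_product.1 hk').1
  simp only [rookRow, Fin.ext_iff, Prod.mk.injEq] at h ⊢
  grind

lemma rookCol_injOn : Set.InjOn (rookCol n) ↑(suppFinset n w ×ˢ (univ : Finset Bool)) := by
  rintro ⟨⟨⟨i, hi⟩, ⟨j, hj⟩, t⟩, s⟩ hk ⟨⟨⟨i', hi'⟩, ⟨j', hj'⟩, t'⟩, s'⟩ hk' h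
  obtain ⟨hij, hwi, hwj⟩ := of_mem_suppFinset hww hodd (mem_product.1 hk).1
  obtain ⟨hij', hwi', hwj'⟩ := of_mem_suppFinset hww hodd (mem_product.1 hk').1
  simp only [rookCol, Fin.ext_iff, Prod.mk.injEq] at h ⊢
  grind

lemma rookCol_lt_rookRow {k : Rook n} (hk : k.1 ∈ suppFinset n w) :
    rookCol n k < rookRow n k := by
  have hlt := (of_mem_suppFinset hww hodd hk).1
  obtain ⟨⟨⟨i, hi⟩, ⟨j, hj⟩, t⟩, s⟩ := k
  simp only [rookCol, rookRow, Fin.lt_def] at hlt ⊢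
  cases s <;> cases t <;> simp <;> omega

lemma rookSet_injOn_fst : Set.InjOn Prod.fst (rookSet n w : Set (Fin (2 * n) × Fin (2 * n))) := by
  simp only [rookSet, coe_image]
  rintro _ ⟨k, hk, rfl⟩ _ ⟨k', hk', rfl⟩ h
  rw [rookRow_injOn hww hodd hk hk' h]

lemma rookSet_injOn_snd : Set.InjOn Prod.snd (rookSet n w : Set (Fin (2 * n) × Fin (2 * n))) := by
  simp only [rookSet, coe_image]
  rintro _ ⟨k, hk, rfl⟩ _ ⟨k', hk', rfl⟩ h
  rw [rookCol_injOn hww hodd hk hk' h]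

lemma snd_lt_fst_of_mem_rookSet {p : Fin (2 * n) × Fin (2 * n)} (hp : p ∈ rookSet n w) :
    p.2 < p.1 := by
  obtain ⟨k, hk, rfl⟩ := mem_image.1 hp
  exact rookCol_lt_rookRow hww hodd (mem_product.1 hk).1

lemma fwxi_apply_rook (xi : Fin n × Fin n × Bool → ℂˣ) {k : Rook n}
    (hk : k ∈ suppFinset n w ×ˢ univ) :
    fwxi n w xi (rookRow n k) (rookCol n k) = rookSign k * xi k.1 := by
  rw [fwxi_eq_sum_single, Matrix.sum_apply, sum_eq_single k]
  · exact single_apply_same _ _ _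
  · exact fun k' hk' hne => single_apply_of_ne _ _ _ _ _
      fun h => hne (rookRow_injOn hww hodd hk' hk h.1)
  · exact fun h => absurd hk h

lemma fwxi_apply_ne_zero_of_mem_rookSet (xi : Fin n × Fin n × Bool → ℂˣ)
    {p : Fin (2 * n) × Fin (2 * n)} (hp : p ∈ rookSet n w) : fwxi n w xi p.1 p.2 ≠ 0 := by
  obtain ⟨k, hk, rfl⟩ := mem_image.1 hp
  rw [fwxi_apply_rook hww hodd xi hk]
  exact mul_ne_zero (by unfold rookSign; split_ifs <;> norm_num) (Units.ne_zero _)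

lemma eq_of_fwxi_eq {xi₁ xi₂ : Fin n × Fin n × Bool → ℂˣ} (h : fwxi n w xi₁ = fwxi n w xi₂)
    {r : Fin n × Fin n × Bool} (hr : r ∈ suppFinset n w) : xi₁ r = xi₂ r := by
  have hr' : ((r, false) : Rook n) ∈ suppFinset n w ×ˢ univ := mem_product.2 ⟨hr, mem_univ _⟩
  have hrook := congrFun₂ h (rookRow n (r, false)) (rookCol n (r, false))
  rw [fwxi_apply_rook hww hodd xi₁ hr', fwxi_apply_rook hww hodd xi₂ hr'] at hrook
  exact Units.ext (by simpa [rookSign] using hrook)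

lemma fwxi_mem_thetaSet (xi : Fin n × Fin n × Bool → ℂˣ) : fwxi n w xi ∈ ThetaSet n w xi := by
  refine ⟨1, ⟨⟨⟨det_one, by simp⟩, fun i j hij => one_apply_ne (ne_of_gt hij)⟩, one_apply_eq⟩, ?_⟩
  ext a b
  simp only [coad, inv_one, mul_one, one_mul, lowPart, of_apply]
  split_ifs with hab
  · rfl
  · exact fwxi_apply_of_notMem_rookSet xi fun h => hab (snd_lt_fst_of_mem_rookSet hww hodd h)

end Rooks

theorem statement9_general (n : ℕ) (w : Equiv.Perm ℤ)
    (hw : IsBasicInvolution n w)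
    (xi1 xi2 : Fin n × Fin n × Bool → ℂˣ)
    (hne : ∃ r ∈ suppFinset n w, xi1 r ≠ xi2 r) :
    ThetaSet n w xi1 ≠ ThetaSet n w xi2 := by
  obtain ⟨⟨hodd, -, -⟩, hinv, -⟩ := hw
  have hww : ∀ x, w (w x) = x := fun x => congrArg (· x) hinv
  intro hΘ
  obtain ⟨u, ⟨⟨-, hu⟩, hu1⟩, hf⟩ : fwxi n w xi1 ∈ ThetaSet n w xi2 :=
    hΘ ▸ fwxi_mem_thetaSet hww hodd xi1
  obtain ⟨huinv, huinv1⟩ :=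
    Matrix.IsUpperTriangular.inv_of_diag_eq_one (u := u) (fun i j => hu i j) hu1
  have hxi : fwxi n w xi1 = fwxi n w xi2 :=
    Matrix.eq_of_strictLower_eq_mul_mul (rookSet_injOn_fst hww hodd) (rookSet_injOn_snd hww hodd)
      (fun _ _ => fwxi_apply_of_notMem_rookSet xi1) (fun _ _ => fwxi_apply_of_notMem_rookSet xi2)
      (fun i j => hu i j) hu1 huinv huinv1
      (fun i j hij => by rw [hf, coad, lowPart, Matrix.of_apply]; exact if_pos hij)
      (fun _ => snd_lt_fst_of_mem_rookSet hww hodd)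
      (fun _ => fwxi_apply_ne_zero_of_mem_rookSet hww hodd xi2)
  obtain ⟨r, hr, hne⟩ := hne
  exact hne (eq_of_fwxi_eq hww hodd hxi hr)

/-- Let `w` be a basic involution in the Weyl group of type `Dₙ`,
`n ≥ 4`, and let `ξ₁ ≠ ξ₂` be maps `Supp(w) → ℂˣ` (i.e. differing at some root of the
support). Then the coadjoint `U`-orbits `Θ_{w,ξ₁}` and `Θ_{w,ξ₂}` are distinct. -/
theorem statement9 (n : ℕ) (hn : 4 ≤ n) (w : Equiv.Perm ℤ)
    (hw : IsBasicInvolution n w)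
    (xi1 xi2 : Fin n × Fin n × Bool → ℂˣ)
    (hne : ∃ r ∈ suppFinset n w, xi1 r ≠ xi2 r) :
    ThetaSet n w xi1 ≠ ThetaSet n w xi2 :=
  statement9_general n w hw xi1 xi2 hne
end

section
/- Let n ≥ 4, let α ∈ 𝒞₁ and let β ∈ Φ⁺ ∖ 𝒞₁. Then s_α ≰ s_β in the Bruhat order on the Weyl group W of type D_n. -/
/-!
The Weyl group of type `Dₙ`, realized as the group of permutations `w` of `ℤ`
supported on `{±1, …, ±n}` with `w (-i) = - w i` and an even number of sign changes.
-/

open Equiv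

/-- The Bruhat order: `v ≤ w` iff some reduced decomposition of `v` is a subword of
some reduced decomposition of `w`. -/
def BruhatLE (n : ℕ) (v w : Equiv.Perm ℤ) : Prop :=
  ∃ Lv Lw : List ℕ, IsReducedWord n v Lv ∧ IsReducedWord n w Lw ∧ Lv.Sublist Lw

/-- Strict Bruhat order. -/
def BruhatLT (n : ℕ) (v w : Equiv.Perm ℤ) : Prop := BruhatLE n v w ∧ v ≠ w

/-- The reflection in the root `ε_i - ε_j` (`plus = false`), i.e. the permutation
`(i,j)(-i,-j)`, or in `ε_i + ε_j` (`plus = true`), i.e. `(i,-j)(-i,j)`. -/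
def rootRefl (i j : ℤ) (plus : Bool) : Equiv.Perm ℤ :=
  if plus then Equiv.swap i (-j) * Equiv.swap (-i) j
  else Equiv.swap i j * Equiv.swap (-i) (-j)

/-! ### Auxiliary lemmas -/

lemma aux_simpleRefl_apply (n : ℕ) (hn : 4 ≤ n) (i : ℕ) (hi : 1 ≤ i) (t : ℤ) :
    simpleRefl n i t =
      if i < n then
        (if t = (i : ℤ) then (i : ℤ) + 1 else if t = (i : ℤ) + 1 then (i : ℤ)
          else if t = -(i : ℤ) then -((i : ℤ) + 1) else if t = -((i : ℤ) + 1) then -(i : ℤ) else t)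
      else
        (if t = (n : ℤ) - 1 then -(n : ℤ) else if t = -(n : ℤ) then (n : ℤ) - 1
          else if t = -((n : ℤ) - 1) then (n : ℤ) else if t = (n : ℤ) then -((n : ℤ) - 1) else t) := by
  unfold simpleRefl
  split_ifs with h <;>
    simp only [Equiv.Perm.mul_apply, Equiv.swap_apply_def] <;>
    split_ifs <;> omega

/-- A root `ε_a + ε_b` (with `ε_{-k} = -ε_k`), encoded by the pair `(x, y)` of its
"signed coordinates", is positive iff the coordinate of smaller absolute value
is positive. -/
def PosRoot (x y : ℤ) : Prop :=
  (0 < x ∧ (x < y ∨ x < -y)) ∨ (0 < y ∧ (y < x ∨ y < -x))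

/-- `q` commutes with negation. -/
def OddP (q : Equiv.Perm ℤ) : Prop := ∀ t : ℤ, q (-t) = -(q t)

lemma aux_oddP_one : OddP 1 := by intro t; simp

lemma aux_oddP_mul {f g : Equiv.Perm ℤ} (hf : OddP f) (hg : OddP g) : OddP (f * g) := by
  intro t; rw [Equiv.Perm.mul_apply, Equiv.Perm.mul_apply, hg t, hf (g t)]

lemma aux_oddP_simpleRefl (n : ℕ) (hn : 4 ≤ n) (i : ℕ) (hi : 1 ≤ i) : OddP (simpleRefl n i) := by
  intro t
  rw [aux_simpleRefl_apply n hn i hi, aux_simpleRefl_apply n hn i hi]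
  split_ifs <;> omega

lemma aux_wordProd_cons (n : ℕ) (a : ℕ) (L : List ℕ) :
    wordProd n (a :: L) = simpleRefl n a * wordProd n L := by simp [wordProd]

lemma aux_wordProd_append (n : ℕ) (A B : List ℕ) :
    wordProd n (A ++ B) = wordProd n A * wordProd n B := by
  simp [wordProd]

lemma aux_oddP_wordProd (n : ℕ) (hn : 4 ≤ n) (L : List ℕ) (hL : ∀ i ∈ L, 1 ≤ i) :
    OddP (wordProd n L) := by
  induction L with
  | nil => exact aux_oddP_one
  | cons a L ih =>
      rw [aux_wordProd_cons]
      exact aux_oddP_mul (aux_oddP_simpleRefl n hn a (hL a (by simp)))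
        (ih fun i h => hL i (by simp [h]))

lemma aux_range_simpleRefl (n : ℕ) (hn : 4 ≤ n) (i : ℕ) (hi : 1 ≤ i) (hin : i ≤ n) (t : ℤ)
    (h1 : 1 ≤ t.natAbs) (h2 : t.natAbs ≤ n) :
    1 ≤ (simpleRefl n i t).natAbs ∧ (simpleRefl n i t).natAbs ≤ n := by
  rw [aux_simpleRefl_apply n hn i hi]
  split_ifs <;> omega

lemma aux_range_wordProd (n : ℕ) (hn : 4 ≤ n) (L : List ℕ) (hL : ∀ i ∈ L, 1 ≤ i ∧ i ≤ n) (t : ℤ)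
    (h1 : 1 ≤ t.natAbs) (h2 : t.natAbs ≤ n) :
    1 ≤ (wordProd n L t).natAbs ∧ (wordProd n L t).natAbs ≤ n := by
  induction L generalizing t with
  | nil =>
      simp only [wordProd, List.map_nil, List.prod_nil, Equiv.Perm.one_apply]
      exact ⟨h1, h2⟩
  | cons a L ih =>
      rw [aux_wordProd_cons, Equiv.Perm.mul_apply]
      have h := ih (fun i h => hL i (by simp [h])) t h1 h2
      exact aux_range_simpleRefl n hn a (hL a (by simp)).1 (hL a (by simp)).2 _ h.1 h.2

lemma aux_fix_one_wordProd (n : ℕ) (hn : 4 ≤ n) (L : List ℕ) (hL : ∀ i ∈ L, 2 ≤ i ∧ i ≤ n) :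
    wordProd n L 1 = 1 ∧ wordProd n L (-1) = -1 := by
  induction L with
  | nil => simp [wordProd]
  | cons a L ih =>
      have h := ih fun i h => hL i (by simp [h])
      have ha := hL a (by simp)
      rw [aux_wordProd_cons, Equiv.Perm.mul_apply, Equiv.Perm.mul_apply, h.1, h.2]
      simp only [aux_simpleRefl_apply n hn a (show 1 ≤ a by omega)]
      constructor <;> split_ifs <;> first | omega | exact ((by assumption : False).elim)

set_option maxHeartbeats 1000000 in
lemma aux_swap_swap_comm (a b c d : ℤ) (h1 : a ≠ c) (h2 : a ≠ d) (h3 : b ≠ c) (h4 : b ≠ d) :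
    Equiv.swap a b * Equiv.swap c d = Equiv.swap c d * Equiv.swap a b := by
  ext t
  simp only [Equiv.Perm.mul_apply, Equiv.swap_apply_def]
  split_ifs <;> omega

lemma aux_s1_def (n : ℕ) (hn : 4 ≤ n) :
    simpleRefl n 1 = Equiv.swap 1 2 * Equiv.swap (-1) (-2) := by
  unfold simpleRefl
  rw [if_pos (by omega : 1 < n)]
  norm_num

lemma aux_s1_sq (n : ℕ) (hn : 4 ≤ n) : simpleRefl n 1 * simpleRefl n 1 = 1 := by
  rw [aux_s1_def n hn]
  have comm : Equiv.swap (-1 : ℤ) (-2) * Equiv.swap 1 2 = Equiv.swap (1 : ℤ) 2 * Equiv.swap (-1) (-2) :=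
    aux_swap_swap_comm _ _ _ _ (by norm_num) (by norm_num) (by norm_num) (by norm_num)
  calc Equiv.swap (1:ℤ) 2 * Equiv.swap (-1:ℤ) (-2) * (Equiv.swap (1:ℤ) 2 * Equiv.swap (-1:ℤ) (-2))
      = Equiv.swap (1:ℤ) 2 * (Equiv.swap (-1:ℤ) (-2) * Equiv.swap (1:ℤ) 2) * Equiv.swap (-1:ℤ) (-2) := by
        rw [mul_assoc, mul_assoc, mul_assoc]
    _ = Equiv.swap (1:ℤ) 2 * (Equiv.swap (1:ℤ) 2 * Equiv.swap (-1:ℤ) (-2)) * Equiv.swap (-1:ℤ) (-2) := by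
        rw [comm]
    _ = (Equiv.swap (1:ℤ) 2 * Equiv.swap (1:ℤ) 2) * (Equiv.swap (-1:ℤ) (-2) * Equiv.swap (-1:ℤ) (-2)) := by
        rw [mul_assoc, mul_assoc, mul_assoc]
    _ = 1 := by rw [Equiv.swap_mul_self, Equiv.swap_mul_self, one_mul]

lemma aux_simpleRefl_cases (n : ℕ) (hn : 4 ≤ n) (i : ℕ) (hi : 1 ≤ i) (t : ℤ) :
    (i < n ∧ ((t = (i:ℤ) ∧ simpleRefl n i t = (i:ℤ)+1) ∨ (t = (i:ℤ)+1 ∧ simpleRefl n i t = (i:ℤ))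
      ∨ (t = -(i:ℤ) ∧ simpleRefl n i t = -((i:ℤ)+1)) ∨ (t = -((i:ℤ)+1) ∧ simpleRefl n i t = -(i:ℤ))
      ∨ (t ≠ (i:ℤ) ∧ t ≠ (i:ℤ)+1 ∧ t ≠ -(i:ℤ) ∧ t ≠ -((i:ℤ)+1) ∧ simpleRefl n i t = t)))
    ∨ (¬ i < n ∧ ((t = (n:ℤ)-1 ∧ simpleRefl n i t = -(n:ℤ)) ∨ (t = -(n:ℤ) ∧ simpleRefl n i t = (n:ℤ)-1)
      ∨ (t = -((n:ℤ)-1) ∧ simpleRefl n i t = (n:ℤ)) ∨ (t = (n:ℤ) ∧ simpleRefl n i t = -((n:ℤ)-1))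
      ∨ (t ≠ (n:ℤ)-1 ∧ t ≠ -(n:ℤ) ∧ t ≠ -((n:ℤ)-1) ∧ t ≠ (n:ℤ) ∧ simpleRefl n i t = t))) := by
  have h := aux_simpleRefl_apply n hn i hi t
  generalize hs : simpleRefl n i t = st at h ⊢
  split_ifs at h <;> omega

set_option maxHeartbeats 0 in
set_option linter.unusedVariables false in
lemma aux_arith_asym (n i : ℕ) (hn : 4 ≤ n) (hi : 1 ≤ i) (hin : i ≤ n) (x y sx sy : ℤ)
    (hxn : -(n:ℤ) ≤ x ∧ x ≤ n) (hyn : -(n:ℤ) ≤ y ∧ y ≤ n) (hxy : x ≠ y ∧ x ≠ -y)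
    (hx' : (i < n ∧ ((x = (i:ℤ) ∧ sx = (i:ℤ)+1) ∨ (x = (i:ℤ)+1 ∧ sx = (i:ℤ))
      ∨ (x = -(i:ℤ) ∧ sx = -((i:ℤ)+1)) ∨ (x = -((i:ℤ)+1) ∧ sx = -(i:ℤ))
      ∨ (x ≠ (i:ℤ) ∧ x ≠ (i:ℤ)+1 ∧ x ≠ -(i:ℤ) ∧ x ≠ -((i:ℤ)+1) ∧ sx = x)))
    ∨ (¬ i < n ∧ ((x = (n:ℤ)-1 ∧ sx = -(n:ℤ)) ∨ (x = -(n:ℤ) ∧ sx = (n:ℤ)-1)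
      ∨ (x = -((n:ℤ)-1) ∧ sx = (n:ℤ)) ∨ (x = (n:ℤ) ∧ sx = -((n:ℤ)-1))
      ∨ (x ≠ (n:ℤ)-1 ∧ x ≠ -(n:ℤ) ∧ x ≠ -((n:ℤ)-1) ∧ x ≠ (n:ℤ) ∧ sx = x))))
    (hy' : (i < n ∧ ((y = (i:ℤ) ∧ sy = (i:ℤ)+1) ∨ (y = (i:ℤ)+1 ∧ sy = (i:ℤ))
      ∨ (y = -(i:ℤ) ∧ sy = -((i:ℤ)+1)) ∨ (y = -((i:ℤ)+1) ∧ sy = -(i:ℤ))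
      ∨ (y ≠ (i:ℤ) ∧ y ≠ (i:ℤ)+1 ∧ y ≠ -(i:ℤ) ∧ y ≠ -((i:ℤ)+1) ∧ sy = y)))
    ∨ (¬ i < n ∧ ((y = (n:ℤ)-1 ∧ sy = -(n:ℤ)) ∨ (y = -(n:ℤ) ∧ sy = (n:ℤ)-1)
      ∨ (y = -((n:ℤ)-1) ∧ sy = (n:ℤ)) ∨ (y = (n:ℤ) ∧ sy = -((n:ℤ)-1))
      ∨ (y ≠ (n:ℤ)-1 ∧ y ≠ -(n:ℤ) ∧ y ≠ -((n:ℤ)-1) ∧ y ≠ (n:ℤ) ∧ sy = y))))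
    (hpos : 0 < x ∧ (x < y ∨ x < -y))
    (hneg : ¬((0 < sx ∧ (sx < sy ∨ sx < -sy)) ∨ (0 < sy ∧ (sy < sx ∨ sy < -sx)))) :
    (x = (i : ℤ) ∧ y = -((i : ℤ) + 1) ∧ i < n) ∨
      (y = (i : ℤ) ∧ x = -((i : ℤ) + 1) ∧ i < n) ∨
      (x = (n : ℤ) - 1 ∧ y = (n : ℤ) ∧ ¬ i < n) ∨
      (y = (n : ℤ) - 1 ∧ x = (n : ℤ) ∧ ¬ i < n) := by
  obtain ⟨hx0, hxlt⟩ := hpos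
  rcases hx' with ⟨hlt, h1|h1|h1|h1|h1⟩|⟨hlt, h1|h1|h1|h1|h1⟩ <;>
    rcases hy' with ⟨hlt', h2|h2|h2|h2|h2⟩|⟨hlt', h2|h2|h2|h2|h2⟩ <;> omega

set_option maxHeartbeats 1000000 in
lemma aux_key (n : ℕ) (hn : 4 ≤ n) (i : ℕ) (hi : 1 ≤ i) (hin : i ≤ n)
    (x y : ℤ) (hxn : -(n:ℤ) ≤ x ∧ x ≤ n) (hyn : -(n:ℤ) ≤ y ∧ y ≤ n)
    (hxy : x ≠ y ∧ x ≠ -y) (hpos : PosRoot x y)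
    (hneg : ¬ PosRoot (simpleRefl n i x) (simpleRefl n i y)) :
    simpleRefl n i = Equiv.swap x (-y) * Equiv.swap (-x) y := by
  simp only [PosRoot] at hpos hneg
  have hcase : (x = (i : ℤ) ∧ y = -((i : ℤ) + 1) ∧ i < n) ∨
      (y = (i : ℤ) ∧ x = -((i : ℤ) + 1) ∧ i < n) ∨
      (x = (n : ℤ) - 1 ∧ y = (n : ℤ) ∧ ¬ i < n) ∨
      (y = (n : ℤ) - 1 ∧ x = (n : ℤ) ∧ ¬ i < n) := by
    rcases hpos with hp | hp
    · exact aux_arith_asym n i hn hi hin x y (simpleRefl n i x) (simpleRefl n i y)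
        hxn hyn hxy (aux_simpleRefl_cases n hn i hi x) (aux_simpleRefl_cases n hn i hi y)
        hp hneg
    · have h := aux_arith_asym n i hn hi hin y x (simpleRefl n i y) (simpleRefl n i x)
        hyn hxn ⟨fun hh => hxy.1 hh.symm, fun hh => hxy.2 (by omega)⟩
        (aux_simpleRefl_cases n hn i hi y)
        (aux_simpleRefl_cases n hn i hi x) hp (fun hh => hneg hh.symm)
      rcases h with h | h | h | h
      · exact Or.inr (Or.inl h)
      · exact Or.inl h
      · exact Or.inr (Or.inr (Or.inr h))
      · exact Or.inr (Or.inr (Or.inl h))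
  unfold simpleRefl
  rcases hcase with ⟨hx, hy, hlt⟩ | ⟨hy, hx, hlt⟩ | ⟨hx, hy, hlt⟩ | ⟨hy, hx, hlt⟩
  · rw [if_pos hlt, hx, hy, neg_neg]
  · rw [if_pos hlt, hx, hy, neg_neg]
    rw [Equiv.swap_comm (-((i:ℤ)+1)) (-(i:ℤ)), Equiv.swap_comm ((i:ℤ)+1) (i:ℤ)]
    exact aux_swap_swap_comm _ _ _ _ (by omega) (by omega) (by omega) (by omega)
  · rw [if_neg hlt, hx, hy]
  · rw [if_neg hlt, hx, hy]
    rw [Equiv.swap_comm (n:ℤ) (-((n:ℤ)-1)), Equiv.swap_comm (-(n:ℤ)) ((n:ℤ)-1)]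
    exact aux_swap_swap_comm _ _ _ _ (by omega) (by omega) (by omega) (by omega)

lemma aux_exists_flip (P : ℕ → Prop) : ∀ r : ℕ, ¬ P 0 → P r → ∃ k, k < r ∧ ¬ P k ∧ P (k + 1) := by
  intro r
  induction r with
  | zero => intro h h'; exact absurd h' h
  | succ r ih =>
      intro h0 hr
      by_cases hP : P r
      · obtain ⟨k, hk, h1, h2⟩ := ih h0 hP
        exact ⟨k, by omega, h1, h2⟩
      · exact ⟨r, by omega, hP, hr⟩

lemma aux_exists_last (a : ℕ) (L : List ℕ) (h : a ∈ L) :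
    ∃ M K : List ℕ, L = M ++ a :: K ∧ a ∉ K := by
  induction L with
  | nil => cases h
  | cons x xs ih =>
      by_cases hx : a ∈ xs
      · obtain ⟨M, K, hMK, hK⟩ := ih hx
        exact ⟨x :: M, K, by rw [hMK]; rfl, hK⟩
      · have hax : a = x := by
          rcases List.mem_cons.1 h with h' | h'
          · exact h'
          · exact absurd h' hx
        exact ⟨[], xs, by rw [hax]; rfl, hx⟩

/-- Let `n ≥ 4`, `α ∈ 𝒞₁` (i.e. `α = ε₁ ∓ ε_{j₁}`, `2 ≤ j₁ ≤ n`) and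
`β ∈ Φ⁺ ∖ 𝒞₁` (i.e. `β = ε_{i₂} ∓ ε_{j₂}`, `2 ≤ i₂ < j₂ ≤ n`). Then `s_α ≰ s_β` in the
Bruhat order on the Weyl group of type `Dₙ`. -/
theorem statement10 (n : ℕ) (hn : 4 ≤ n)
    (j₁ : ℤ) (hj₁ : 2 ≤ j₁) (hj₁' : j₁ ≤ (n : ℤ)) (b₁ : Bool)
    (i₂ j₂ : ℤ) (hi₂ : 2 ≤ i₂) (hij : i₂ < j₂) (hj₂ : j₂ ≤ (n : ℤ)) (b₂ : Bool) :
    ¬ BruhatLE n (rootRefl 1 j₁ b₁) (rootRefl i₂ j₂ b₂) := by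
  rintro ⟨Lv, Lw, ⟨hvW, hvP, hvL⟩, ⟨hwW, hwP, hwL⟩, hsub⟩
  -- `s_α` moves `1`
  have hv1 : rootRefl 1 j₁ b₁ 1 ≠ 1 := by
    cases b₁ <;>
      simp only [rootRefl, Bool.false_eq_true, if_false, if_true,
        Equiv.Perm.mul_apply, Equiv.swap_apply_def] <;>
      split_ifs <;> omega
  -- hence `1` occurs in `Lv`, hence in `Lw`
  have h1v : 1 ∈ Lv := by
    by_contra h1
    have hL2 : ∀ i ∈ Lv, 2 ≤ i ∧ i ≤ n := by
      intro i hi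
      have h := hvW i hi
      have : i ≠ 1 := fun h' => h1 (h' ▸ hi)
      omega
    exact hv1 (by rw [← hvP]; exact (aux_fix_one_wordProd n hn Lv hL2).1)
  have h1w : 1 ∈ Lw := hsub.subset h1v
  -- last occurrence of `1` in `Lw`
  obtain ⟨M, K, hMK, hK⟩ := aux_exists_last 1 Lw h1w
  have hMword : ∀ i ∈ M, 1 ≤ i ∧ i ≤ n := fun i hi =>
    hwW i (by rw [hMK]; exact List.mem_append_left _ hi)
  have hKword : ∀ i ∈ K, 2 ≤ i ∧ i ≤ n := by
    intro i hi
    have h := hwW i (by rw [hMK]; exact List.mem_append_right _ (List.mem_cons_of_mem _ hi))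
    have : i ≠ 1 := fun h' => hK (h' ▸ hi)
    omega
  -- `s_β` fixes `1`
  have hw1 : rootRefl i₂ j₂ b₂ 1 = 1 := by
    cases b₂ <;>
      simp only [rootRefl, Bool.false_eq_true, if_false, if_true,
        Equiv.Perm.mul_apply, Equiv.swap_apply_def] <;>
      split_ifs <;> omega
  have hu1 : wordProd n K 1 = 1 := (aux_fix_one_wordProd n hn K hKword).1
  have hsplitw : wordProd n M * (simpleRefl n 1 * wordProd n K) = rootRefl i₂ j₂ b₂ := by
    rw [← hwP, hMK, aux_wordProd_append, aux_wordProd_cons]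
  -- the prefix `p = wordProd M` satisfies `p 2 = 1`, `p (-2) = -1`
  have h21 : simpleRefl n 1 (1 : ℤ) = 2 := by
    rw [aux_simpleRefl_apply n hn 1 le_rfl]
    split_ifs <;> omega
  have hp2 : wordProd n M 2 = 1 := by
    have hcf : (wordProd n M * (simpleRefl n 1 * wordProd n K)) 1 = rootRefl i₂ j₂ b₂ 1 := by
      rw [hsplitw]
    rw [Equiv.Perm.mul_apply, Equiv.Perm.mul_apply, hu1, h21, hw1] at hcf
    exact hcf
  have hoddM : OddP (wordProd n M) := aux_oddP_wordProd n hn M fun i hi => (hMword i hi).1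
  have hpneg2 : wordProd n M (-2) = -1 := by
    have := hoddM 2
    rw [hp2] at this
    exact this
  -- search for the flip point
  have hstart : ¬ PosRoot (wordProd n (List.drop 0 M) 1) (wordProd n (List.drop 0 M) (-2)) := by
    rw [List.drop_zero, hpneg2]
    simp only [PosRoot]
    omega
  have hend : PosRoot (wordProd n (List.drop M.length M) 1)
      (wordProd n (List.drop M.length M) (-2)) := by
    rw [List.drop_length]
    simp only [wordProd, List.map_nil, List.prod_nil, Equiv.Perm.one_apply, PosRoot]
    omega
  obtain ⟨k, hk, hnegk, hposk⟩ := aux_exists_flip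
    (fun k => PosRoot (wordProd n (List.drop k M) 1) (wordProd n (List.drop k M) (-2)))
    M.length hstart hend
  have hdrop : List.drop k M = M[k]'hk :: List.drop (k + 1) M := List.drop_eq_getElem_cons hk
  have hiw : 1 ≤ M[k]'hk ∧ M[k]'hk ≤ n := hMword _ (M.getElem_mem hk)
  have hqword : ∀ a ∈ List.drop (k + 1) M, 1 ≤ a ∧ a ≤ n := fun a ha =>
    hMword a (List.drop_subset _ _ ha)
  have hoddq : OddP (wordProd n (List.drop (k + 1) M)) :=
    aux_oddP_wordProd n hn _ fun a ha => (hqword a ha).1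
  have hxr := aux_range_wordProd n hn _ hqword 1 (by norm_num) (by omega)
  have hyr := aux_range_wordProd n hn _ hqword (-2) (by norm_num) (by
    show ((-2 : ℤ)).natAbs ≤ n
    norm_num
    omega)
  have hinj : wordProd n (List.drop (k + 1) M) 1 ≠ wordProd n (List.drop (k + 1) M) (-2) ∧
      wordProd n (List.drop (k + 1) M) 1 ≠ -(wordProd n (List.drop (k + 1) M) (-2)) := by
    constructor
    · intro h
      have := (wordProd n (List.drop (k + 1) M)).injective h
      norm_num at this
    · intro h
      rw [hoddq 2, neg_neg] at h
      have := (wordProd n (List.drop (k + 1) M)).injective h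
      norm_num at this
  have hnegk' : ¬ PosRoot (simpleRefl n (M[k]'hk) (wordProd n (List.drop (k + 1) M) 1))
      (simpleRefl n (M[k]'hk) (wordProd n (List.drop (k + 1) M) (-2))) := by
    have hd : wordProd n (List.drop k M) = simpleRefl n (M[k]'hk) * wordProd n (List.drop (k + 1) M) := by
      rw [hdrop, aux_wordProd_cons]
    rw [hd] at hnegk
    simpa only [Equiv.Perm.mul_apply] using hnegk
  have hkey := aux_key n hn (M[k]'hk) hiw.1 hiw.2
    (wordProd n (List.drop (k + 1) M) 1) (wordProd n (List.drop (k + 1) M) (-2))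
    (by omega) (by omega) hinj hposk hnegk'
  -- conjugation: `s_{m_k} * q = q * s_1`
  have hconj : simpleRefl n (M[k]'hk) * wordProd n (List.drop (k + 1) M) =
      wordProd n (List.drop (k + 1) M) * simpleRefl n 1 := by
    rw [hkey, aux_s1_def n hn]
    have e1 : -(wordProd n (List.drop (k + 1) M) (-2)) = wordProd n (List.drop (k + 1) M) 2 := by
      rw [hoddq 2, neg_neg]
    have e2 : -(wordProd n (List.drop (k + 1) M) 1) = wordProd n (List.drop (k + 1) M) (-1) := by
      rw [hoddq 1]
    rw [e1, e2]
    rw [show wordProd n (List.drop (k + 1) M) (-2) = wordProd n (List.drop (k + 1) M) (-2) from rfl]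
    rw [Equiv.swap_apply_apply, Equiv.swap_apply_apply]
    group
  -- the shorter word
  have hshort : wordProd n (List.take k M ++ (List.drop (k + 1) M ++ K)) = rootRefl i₂ j₂ b₂ := by
    rw [aux_wordProd_append, aux_wordProd_append, ← hsplitw]
    have hM' : wordProd n M =
        wordProd n (List.take k M) * (simpleRefl n (M[k]'hk) * wordProd n (List.drop (k + 1) M)) := by
      conv_lhs => rw [← List.take_append_drop k M]
      rw [aux_wordProd_append, hdrop, aux_wordProd_cons]
    rw [hM', hconj]
    have hcan : wordProd n (List.drop (k + 1) M) * simpleRefl n 1 * (simpleRefl n 1 * wordProd n K) =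
        wordProd n (List.drop (k + 1) M) * wordProd n K := by
      rw [mul_assoc, ← mul_assoc (simpleRefl n 1), aux_s1_sq n hn, one_mul]
    rw [mul_assoc, hcan]
  have hword' : IsWord n (List.take k M ++ (List.drop (k + 1) M ++ K)) := by
    intro a ha
    rcases List.mem_append.1 ha with h | h
    · exact hMword a (List.take_subset _ _ h)
    · rcases List.mem_append.1 h with h | h
      · exact hMword a (List.drop_subset _ _ h)
      · have := hKword a h; omega
  have hle : weylLength n (rootRefl i₂ j₂ b₂) ≤
      (List.take k M ++ (List.drop (k + 1) M ++ K)).length :=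
    Nat.sInf_le ⟨_, hword', rfl, hshort⟩
  have hlen1 : Lw.length = M.length + (K.length + 1) := by
    rw [hMK]; simp [List.length_append]
  rw [List.length_append, List.length_append, List.length_take, List.length_drop] at hle
  rw [hwL] at hlen1
  omega
end

section
/- Let n ≥ 4, let 2 ≤ j ≤ n, and let w ∈ W be a basic involution with w(1) = −j. Define u = s_j s_{j+1}⋯s_{n−1} s_n s_{n−2} s_{n−3}⋯s_2 s_1 ∈ W. Then: (a) if j < n, u is the permutation with u(1) = −j, u(i) = i−1 for 2 ≤ i ≤ j, u(i) = i for j < i ≤ n−1, and u(n) = −n; if j = n, u is the permutation with u(1) = −n, u(i) = i−1 for 2 ≤ i ≤ n−1, and u(n) = −(n−1); (b) u^{−1}w lies in the subgroup W̃ generated by s_2,…,s_n (equivalently, u^{−1}w fixes 1); and (c) ℓ(u s_i) = ℓ(u) + 1 for every 2 ≤ i ≤ n. -/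
/-!
The Weyl group of type `Dₙ`, realized as the group of permutations `w` of `ℤ`
supported on `{±1, …, ±n}` with `w (-i) = - w i` and an even number of sign changes.
-/

open Equiv

/-- The word `[j, j+1, …, n-1, n, n-2, n-3, …, 2, 1]`,
i.e. `u = s_j s_{j+1} ⋯ s_{n-1} sₙ s_{n-2} s_{n-3} ⋯ s₂ s₁`. -/
def uWordPlus (n j : ℕ) : List ℕ :=
  ((List.range (n - j)).map fun t => j + t) ++ [n] ++ (List.range (n - 2)).reverse.map (· + 1)

/-!
The runs `s_j ⋯ s_{n-1}` and `s_{n-2} ⋯ s₁` of `u` act as cycles on consecutive integers (and on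
their negatives), and `sₙ` links them; this gives (a). In particular `u 1 = -j = w 1`, so `u⁻¹ w`
is an element of `W` fixing `1`. Here `W` is a subgroup because the parity of the number of sign
changes of `v` is read off from `∏_{i ≤ n} sign (v i)`, which is multiplicative. An element of `W`
fixing `1` lies in `W̃` by descent on the inversion number: unless it is the identity, it has a
descent at some `sᵢ` with `i ≥ 2`.

The inversion number grows by at most one under right multiplication by a simple reflection, so it
bounds `ℓ` from below. For `u` it equals the length of the defining word, and every `sᵢ` with
`i ≥ 2` is an ascent of `u`; this computes `ℓ(u)` and `ℓ(u sᵢ)` exactly, giving (c).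
-/

open Finset

lemma simpleRefl_apply_of_lt {n i : ℕ} (h1 : 1 ≤ i) (hi : i < n) (x : ℤ) :
    simpleRefl n i x = if x = (i : ℤ) then (i : ℤ) + 1 else if x = (i : ℤ) + 1 then (i : ℤ)
      else if x = -(i : ℤ) then -((i : ℤ) + 1) else if x = -((i : ℤ) + 1) then -(i : ℤ)
      else x := by
  simp only [simpleRefl, if_pos hi, Perm.mul_apply, swap_apply_def]
  split_ifs <;> omega

lemma simpleRefl_self_apply {n : ℕ} (hn : 2 ≤ n) (x : ℤ) :
    simpleRefl n n x = if x = (n : ℤ) - 1 then -(n : ℤ) else if x = -(n : ℤ) then (n : ℤ) - 1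
      else if x = -((n : ℤ) - 1) then (n : ℤ) else if x = (n : ℤ) then -((n : ℤ) - 1)
      else x := by
  simp only [simpleRefl, lt_irrefl, if_false, Perm.mul_apply, swap_apply_def]
  split_ifs <;> omega

section SignedPerm

variable {n : ℕ} {g : Perm ℤ}

lemma apply_zero_of_odd (hg : ∀ x, g (-x) = -g x) : g 0 = 0 := by
  have := hg 0
  rw [neg_zero] at this
  omega

lemma apply_ne_zero_of_odd (hg : ∀ x, g (-x) = -g x) {x : ℤ} (hx : x ≠ 0) : g x ≠ 0 :=
  fun h => hx (g.injective (h.trans (apply_zero_of_odd hg).symm))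

lemma abs_apply_le_of_fixes (hg : ∀ x : ℤ, (n : ℤ) < |x| → g x = x) {x : ℤ}
    (hx : |x| ≤ n) : |g x| ≤ n := by
  by_contra h
  have := g.injective (hg (g x) (not_le.mp h))
  rw [this] at h
  exact h hx

lemma inv_apply_neg_of_odd (hg : ∀ x, g (-x) = -g x) (x : ℤ) : g⁻¹ (-x) = -g⁻¹ x := by
  rw [Perm.inv_eq_iff_eq, hg, ← Perm.mul_apply, mul_inv_cancel, Perm.one_apply]

lemma inv_apply_of_fixes (hg : ∀ x : ℤ, (n : ℤ) < |x| → g x = x) {x : ℤ} (hx : (n : ℤ) < |x|) :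
    g⁻¹ x = x := by
  rw [Perm.inv_eq_iff_eq, hg x hx]

lemma abs_apply_abs_of_odd (hg : ∀ x, g (-x) = -g x) (x : ℤ) : |g (|x|)| = |g x| := by
  rcases abs_choice x with h | h <;> rw [h]
  rw [hg, abs_neg]

noncomputable def negCount (n : ℕ) (g : Perm ℤ) : ℕ :=
  ((Icc (1 : ℤ) n).filter fun x => g x < 0).card

lemma prod_sign_eq_neg_one_pow_negCount (hg : ∀ x, g (-x) = -g x) :
    ∏ x ∈ Icc (1 : ℤ) n, (g x).sign = (-1) ^ negCount n g := by
  have hneg : ∀ x ∈ (Icc (1 : ℤ) n).filter (g · < 0), (g x).sign = -1 := fun x hx =>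
    Int.sign_eq_neg_one_of_neg (mem_filter.mp hx).2
  have hpos : ∀ x ∈ (Icc (1 : ℤ) n).filter (¬g · < 0), (g x).sign = 1 := by
    intro x hx
    simp only [mem_filter, mem_Icc, not_lt] at hx
    exact Int.sign_eq_one_of_pos
      (lt_of_le_of_ne hx.2 (apply_ne_zero_of_odd hg (by omega)).symm)
  rw [← prod_filter_mul_prod_filter_not _ (fun x => g x < 0), prod_congr rfl hneg,
    prod_congr rfl hpos, prod_const, prod_const_one, mul_one, negCount]

lemma prod_sign_mul {f : Perm ℤ} (hf : ∀ x, f (-x) = -f x) (hg : ∀ x, g (-x) = -g x)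
    (hgn : ∀ x : ℤ, (n : ℤ) < |x| → g x = x) :
    ∏ x ∈ Icc (1 : ℤ) n, ((f * g) x).sign
      = (∏ x ∈ Icc (1 : ℤ) n, (f x).sign) * ∏ x ∈ Icc (1 : ℤ) n, (g x).sign := by
  have hsplit : ∀ x ∈ Icc (1 : ℤ) n, ((f * g) x).sign = (f |g x|).sign * (g x).sign := by
    intro x hx
    rw [mem_Icc] at hx
    rcases lt_or_gt_of_ne (apply_ne_zero_of_odd hg (x := x) (by omega)) with h | h
    · rw [abs_of_neg h, Int.sign_eq_neg_one_of_neg h, Perm.mul_apply, hf, Int.sign_neg,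
        mul_neg_one, neg_neg]
    · rw [abs_of_pos h, Int.sign_eq_one_of_pos h, mul_one, Perm.mul_apply]
  have hmem : ∀ {h : Perm ℤ}, (∀ x, h (-x) = -h x) → (∀ x : ℤ, (n : ℤ) < |x| → h x = x) →
      ∀ x ∈ Icc (1 : ℤ) n, |h x| ∈ Icc (1 : ℤ) n := by
    intro h hodd hfix x hx
    rw [mem_Icc] at hx ⊢
    have h0 := apply_ne_zero_of_odd hodd (x := x) (by omega)
    have hle := abs_apply_le_of_fixes hfix (x := x) (by rw [abs_of_pos (by omega)]; exact hx.2)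
    exact ⟨Int.one_le_abs h0, hle⟩
  rw [prod_congr rfl hsplit, prod_mul_distrib]
  congr 1
  apply prod_nbij' (fun x => |g x|) (fun y => |g⁻¹ y|) (hmem hg hgn)
    (hmem (inv_apply_neg_of_odd hg) fun x hx => inv_apply_of_fixes hgn hx)
  · intro x hx
    rw [abs_apply_abs_of_odd (inv_apply_neg_of_odd hg), ← Perm.mul_apply, inv_mul_cancel,
      Perm.one_apply, abs_of_pos (by rw [mem_Icc] at hx; omega)]
  · intro y hy
    rw [abs_apply_abs_of_odd hg, ← Perm.mul_apply, mul_inv_cancel, Perm.one_apply,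
      abs_of_pos (by rw [mem_Icc] at hy; omega)]
  · intro x _
    rfl

lemma neg_one_pow_negCount_mul {f : Perm ℤ} (hf : ∀ x, f (-x) = -f x)
    (hg : ∀ x, g (-x) = -g x) (hgn : ∀ x : ℤ, (n : ℤ) < |x| → g x = x) :
    (-1 : ℤ) ^ negCount n (f * g) = (-1) ^ negCount n f * (-1) ^ negCount n g := by
  have hfg : ∀ x, (f * g) (-x) = -(f * g) x := fun x => by simp only [Perm.mul_apply, hg, hf]
  rw [← prod_sign_eq_neg_one_pow_negCount hfg, ← prod_sign_eq_neg_one_pow_negCount hf,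
    ← prod_sign_eq_neg_one_pow_negCount hg, prod_sign_mul hf hg hgn]

lemma negCount_one : negCount n 1 = 0 := by
  rw [negCount, card_eq_zero, filter_eq_empty_iff]
  intro x hx
  simp only [mem_Icc] at hx
  simp only [Perm.one_apply]
  omega

end SignedPerm

def weylD (n : ℕ) : Subgroup (Perm ℤ) where
  carrier := {w | IsD n w}
  mul_mem' := by
    rintro f g ⟨hf, hfn, hfe⟩ ⟨hg, hgn, hge⟩
    refine ⟨fun x => by simp only [Perm.mul_apply, hg, hf],
      fun x hx => by rw [Perm.mul_apply, hgn x hx, hfn x hx], ?_⟩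
    change Even (negCount n _) at hfe hge ⊢
    rw [← neg_one_pow_eq_one_iff_even (R := ℤ) (by decide)] at hfe hge ⊢
    rw [neg_one_pow_negCount_mul hf hg hgn, hfe, hge, one_mul]
  one_mem' := ⟨fun _ => rfl, fun _ _ => rfl, by
    change Even (negCount n 1); rw [negCount_one]; exact Even.zero⟩
  inv_mem' := by
    rintro g ⟨hg, hgn, hge⟩
    have hg' := inv_apply_neg_of_odd hg
    refine ⟨hg', fun x hx => inv_apply_of_fixes hgn hx, ?_⟩
    change Even (negCount n _) at hge ⊢
    rw [← neg_one_pow_eq_one_iff_even (R := ℤ) (by decide)] at hge ⊢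
    have h := neg_one_pow_negCount_mul hg' hg hgn
    rwa [inv_mul_cancel, negCount_one, pow_zero, hge, mul_one, eq_comm] at h

lemma simpleRefl_mem_weylD {n i : ℕ} (hn : 2 ≤ n) (h1 : 1 ≤ i) (hi : i ≤ n) :
    simpleRefl n i ∈ weylD n := by
  rcases hi.lt_or_eq with hi | hi
  · refine ⟨fun x => ?_, fun x hx => ?_, ?_⟩
    · rw [simpleRefl_apply_of_lt h1 hi, simpleRefl_apply_of_lt h1 hi]; split_ifs <;> omega
    · rw [simpleRefl_apply_of_lt h1 hi]
      rcases abs_cases x with ⟨h, _⟩ | ⟨h, _⟩ <;> rw [h] at hx <;> split_ifs <;> omega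
    · change Even (negCount n _)
      suffices negCount n (simpleRefl n i) = 0 from this ▸ Even.zero
      rw [negCount, card_eq_zero, filter_eq_empty_iff]
      intro x hx
      rw [mem_Icc] at hx
      rw [simpleRefl_apply_of_lt h1 hi]; split_ifs <;> omega
  · rw [hi]
    refine ⟨fun x => ?_, fun x hx => ?_, ?_⟩
    · rw [simpleRefl_self_apply hn, simpleRefl_self_apply hn]; split_ifs <;> omega
    · rw [simpleRefl_self_apply hn]
      rcases abs_cases x with ⟨h, _⟩ | ⟨h, _⟩ <;> rw [h] at hx <;> split_ifs <;> omega
    · change Even (negCount n _)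
      suffices negCount n (simpleRefl n n) = 2 from this ▸ even_two
      rw [negCount, card_eq_two]
      refine ⟨(n : ℤ) - 1, n, by omega, ?_⟩
      ext x
      simp only [mem_filter, mem_Icc, mem_insert, mem_singleton, simpleRefl_self_apply hn]
      split_ifs <;> omega

lemma wordProd_mem_weylD {n : ℕ} (hn : 2 ≤ n) {L : List ℕ} (hL : IsWord n L) :
    wordProd n L ∈ weylD n :=
  Subgroup.list_prod_mem _ fun s hs => by
    obtain ⟨i, hi, rfl⟩ := List.mem_map.mp hs
    exact simpleRefl_mem_weylD hn (hL i hi).1 (hL i hi).2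

-- `invCount` is the inversion number of `Dₙ` (it equals `ℓ`), written so that the contribution
-- `pairInv c d` of a pair of positions does not depend on the sign of `d`: then right
-- multiplication by `sₙ` merely relabels the pairs.
def pairInv (c d : ℤ) : ℕ :=
  if 0 < c then (if -c < d ∧ d < c then 1 else 0) else if -c < d ∨ d < c then 2 else 1

lemma pairInv_neg_right (c d : ℤ) : pairInv c (-d) = pairInv c d := by
  unfold pairInv; split_ifs <;> omega

lemma pairInv_swap_le (c d : ℤ) : pairInv d c ≤ pairInv c d + 1 := by
  unfold pairInv; split_ifs <;> omega

-- `IsAscent (v i) (v (i + 1))`, resp. `IsAscent (v (n - 1)) (-v n)`, says that right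
-- multiplication by `sᵢ`, resp. `sₙ`, raises `invCount n v` by one.
def IsAscent (c d : ℤ) : Prop := (0 < c ∧ (d < 0 ∨ c < d)) ∨ (c < d ∧ d < 0)

lemma pairInv_swap_of_isAscent {c d : ℤ} (h : IsAscent c d) :
    pairInv d c = pairInv c d + 1 := by
  unfold IsAscent at h; unfold pairInv; split_ifs <;> omega

lemma pairInv_swap_of_not_isAscent {c d : ℤ} (hd : d ≠ 0) (hcd : c ≠ d) (h : ¬IsAscent c d) :
    pairInv c d = pairInv d c + 1 := by
  unfold IsAscent at h; unfold pairInv; split_ifs <;> omega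

noncomputable def posPairs (n : ℕ) : Finset (ℤ × ℤ) :=
  (Icc (1 : ℤ) n ×ˢ Icc (1 : ℤ) n).filter fun p => p.1 < p.2

lemma mem_posPairs {n : ℕ} {p : ℤ × ℤ} : p ∈ posPairs n ↔ 1 ≤ p.1 ∧ p.1 < p.2 ∧ p.2 ≤ n := by
  simp only [posPairs, mem_filter, mem_product, mem_Icc]
  omega

noncomputable def invCount (n : ℕ) (v : Perm ℤ) : ℕ := ∑ p ∈ posPairs n, pairInv (v p.1) (v p.2)

section InvCount

variable {n : ℕ}

lemma invCount_one : invCount n 1 = 0 :=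
  sum_eq_zero fun p hp => by
    rw [mem_posPairs] at hp
    rw [Perm.one_apply, Perm.one_apply]
    unfold pairInv
    split_ifs <;> omega

lemma sum_posPairs_erase_swap (f : ℤ → ℤ → ℕ) {k l : ℤ} (hk : 1 ≤ k) (hl : l = k + 1)
    (hln : l ≤ n) :
    ∑ p ∈ (posPairs n).erase (k, l), f (swap k l p.1) (swap k l p.2)
      = ∑ p ∈ (posPairs n).erase (k, l), f p.1 p.2 := by
  have hmaps : ∀ p ∈ (posPairs n).erase (k, l),
      (swap k l p.1, swap k l p.2) ∈ (posPairs n).erase (k, l) := by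
    rintro ⟨a, b⟩ hp
    simp only [mem_erase, mem_posPairs, ne_eq, Prod.mk.injEq, swap_apply_def] at hp ⊢
    split_ifs <;> omega
  exact sum_nbij' _ _ hmaps hmaps (fun p _ => by simp) (fun p _ => by simp) fun p _ => rfl

lemma invCount_eq_sum_erase_add (v : Perm ℤ) {k l : ℤ} (hk : 1 ≤ k) (hl : k < l) (hln : l ≤ n) :
    invCount n v = ∑ p ∈ (posPairs n).erase (k, l), pairInv (v p.1) (v p.2)
      + pairInv (v k) (v l) :=
  (sum_erase_add _ _ (mem_posPairs.mpr ⟨hk, hl, hln⟩)).symm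

lemma invCount_mul_simpleRefl_of_lt (v : Perm ℤ) {i : ℕ} (h1 : 1 ≤ i) (hi : i < n) :
    invCount n (v * simpleRefl n i) + pairInv (v i) (v (i + 1))
      = invCount n v + pairInv (v (i + 1)) (v i) := by
  have hs : ∀ x : ℤ, 1 ≤ x → x ≤ n → simpleRefl n i x = swap (i : ℤ) (i + 1) x := by
    intro x hx1 hx2
    rw [simpleRefl_apply_of_lt h1 hi, swap_apply_def]
    split_ifs <;> omega
  have hsum : ∑ p ∈ (posPairs n).erase ((i : ℤ), (i : ℤ) + 1),
      pairInv ((v * simpleRefl n i) p.1) ((v * simpleRefl n i) p.2)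
        = ∑ p ∈ (posPairs n).erase ((i : ℤ), (i : ℤ) + 1), pairInv (v p.1) (v p.2) := by
    rw [← sum_posPairs_erase_swap (fun a b => pairInv (v a) (v b)) (by omega) rfl (by omega)]
    refine sum_congr rfl fun p hp => ?_
    replace hp := mem_posPairs.mp (mem_of_mem_erase hp)
    rw [Perm.mul_apply, Perm.mul_apply, hs p.1 (by omega) (by omega), hs p.2 (by omega) (by omega)]
  have hsplit := fun w => invCount_eq_sum_erase_add (n := n) w (k := i) (l := i + 1)
    (by omega) (by omega) (by omega)
  rw [hsplit, hsplit, hsum, Perm.mul_apply, Perm.mul_apply, hs _ (by omega) (by omega),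
    hs _ (by omega) (by omega), swap_apply_left, swap_apply_right]
  omega

lemma invCount_mul_simpleRefl_self (hn : 2 ≤ n) {v : Perm ℤ} (hv : ∀ x, v (-x) = -v x) :
    invCount n (v * simpleRefl n n) + pairInv (v (n - 1)) (-v n)
      = invCount n v + pairInv (-v n) (v (n - 1)) := by
  have hsum : ∑ p ∈ (posPairs n).erase ((n : ℤ) - 1, n),
      pairInv ((v * simpleRefl n n) p.1) ((v * simpleRefl n n) p.2)
        = ∑ p ∈ (posPairs n).erase ((n : ℤ) - 1, n), pairInv (v p.1) (v p.2) := by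
    rw [← sum_posPairs_erase_swap (fun a b => pairInv (v a) (v b)) (by omega) (by omega) le_rfl]
    refine sum_congr rfl fun p hp => ?_
    obtain ⟨hne, hp⟩ := mem_erase.mp hp
    rw [mem_posPairs] at hp
    have hp1 : p.1 ≤ n - 2 := by
      by_contra h
      exact hne (Prod.ext (by simp only; omega) (by simp only; omega))
    -- `sₙ` agrees with the swap of `n - 1, n` up to sign on `{1, …, n}`,
    -- and `pairInv` ignores the sign of its second argument
    have e1 : (v * simpleRefl n n) p.1 = v (swap ((n : ℤ) - 1) n p.1) := by
      rw [Perm.mul_apply, simpleRefl_self_apply hn, swap_apply_def]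
      split_ifs <;> first | rfl | omega
    have e2 : (v * simpleRefl n n) p.2 = v (swap ((n : ℤ) - 1) n p.2) ∨
        (v * simpleRefl n n) p.2 = -v (swap ((n : ℤ) - 1) n p.2) := by
      rw [Perm.mul_apply, simpleRefl_self_apply hn, swap_apply_def, ← hv]
      split_ifs <;> first | exact Or.inl rfl | exact Or.inr rfl | (left; congr 1; omega)
    rw [e1]
    rcases e2 with e2 | e2 <;> rw [e2]
    exact pairInv_neg_right _ _
  have e1 : (v * simpleRefl n n) ((n : ℤ) - 1) = -v n := by
    rw [Perm.mul_apply, simpleRefl_self_apply hn, if_pos rfl, hv]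
  have e2 : (v * simpleRefl n n) n = -v ((n : ℤ) - 1) := by
    rw [Perm.mul_apply, simpleRefl_self_apply hn, ← hv]
    split_ifs <;> first | rfl | omega
  have hsplit := fun w => invCount_eq_sum_erase_add (n := n) w (k := n - 1) (l := n)
    (by omega) (by omega) le_rfl
  rw [hsplit, hsplit, hsum, e1, e2, pairInv_neg_right, pairInv_neg_right]
  omega

end InvCount

section Length

variable {n : ℕ}

lemma wordProd_append_singleton (L : List ℕ) (i : ℕ) :
    wordProd n (L ++ [i]) = wordProd n L * simpleRefl n i := by
  simp [wordProd]

lemma invCount_mul_simpleRefl_le (hn : 2 ≤ n) {v : Perm ℤ} (hv : ∀ x, v (-x) = -v x) {i : ℕ}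
    (h1 : 1 ≤ i) (hi : i ≤ n) : invCount n (v * simpleRefl n i) ≤ invCount n v + 1 := by
  rcases hi.lt_or_eq with hi | rfl
  · have := invCount_mul_simpleRefl_of_lt v h1 hi
    have := pairInv_swap_le (v i) (v (i + 1))
    omega
  · have := invCount_mul_simpleRefl_self hn hv
    have := pairInv_swap_le (v (i - 1)) (-v i)
    omega

lemma invCount_wordProd_le_length (hn : 2 ≤ n) {L : List ℕ} (hL : IsWord n L) :
    invCount n (wordProd n L) ≤ L.length := by
  induction L using List.reverseRecOn with
  | nil => exact (invCount_one (n := n)).le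
  | append_singleton L i ih =>
    have hL' : IsWord n L := fun k hk => hL k (List.mem_append_left _ hk)
    have hi := hL i (List.mem_append_right _ (List.mem_singleton_self i))
    rw [wordProd_append_singleton, List.length_append, List.length_singleton]
    exact (invCount_mul_simpleRefl_le hn (wordProd_mem_weylD hn hL').1 hi.1 hi.2).trans
      (Nat.add_le_add_right (ih hL') 1)

lemma invCount_le_weylLength (hn : 2 ≤ n) {L : List ℕ} (hL : IsWord n L) :
    invCount n (wordProd n L) ≤ weylLength n (wordProd n L) := by
  obtain ⟨L', hL', hlen, hprod⟩ :=
    Nat.sInf_mem (⟨L.length, L, hL, rfl, rfl⟩ :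
      {l | ∃ L' : List ℕ, IsWord n L' ∧ L'.length = l ∧ wordProd n L' = wordProd n L}.Nonempty)
  rw [weylLength, ← hlen, ← hprod]
  exact invCount_wordProd_le_length hn hL'

lemma weylLength_wordProd_of_invCount_eq (hn : 2 ≤ n) {L : List ℕ} (hL : IsWord n L)
    (h : invCount n (wordProd n L) = L.length) : weylLength n (wordProd n L) = L.length :=
  le_antisymm (Nat.sInf_le ⟨L, hL, rfl, rfl⟩) (h ▸ invCount_le_weylLength hn hL)

end Length

lemma eq_self_of_lt_succ {f : ℤ → ℤ} {a b : ℤ} (hf : ∀ i, a ≤ i → i < b → f i < f (i + 1))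
    (ha : a ≤ f a) (hb : f b ≤ b) {x : ℤ} (hax : a ≤ x) (hxb : x ≤ b) : f x = x := by
  have hlow : ∀ x, a ≤ x → x ≤ b → x ≤ f x := by
    intro x hx
    induction x, hx using Int.leInduction with
    | base => exact fun _ => ha
    | succ k hk ih => intro hkb; have := ih (by omega); have := hf k hk (by omega); omega
  have hup : ∀ x, x ≤ b → a ≤ x → f x ≤ x := by
    intro x hx
    induction x, hx using Int.leInductionDown with
    | base => exact fun _ => hb
    | pred k hk ih =>
      intro hak
      have := ih (by omega)
      have := hf (k - 1) hak (by omega)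
      rw [sub_add_cancel] at this
      omega
  exact le_antisymm (hup x hxb hax) (hlow x hax hxb)

section Descent

variable {n : ℕ} {v : Perm ℤ}

lemma eq_one_of_apply_eq_self (hv : v ∈ weylD n) (h : ∀ x : ℤ, 1 ≤ x → x ≤ n → v x = x) :
    v = 1 := by
  refine Perm.ext fun x => ?_
  rw [Perm.one_apply]
  by_cases hx : (n : ℤ) < |x|
  · exact hv.2.1 x hx
  rw [not_lt] at hx
  rcases lt_trichotomy x 0 with hx0 | rfl | hx0
  · rw [← neg_neg x, hv.1, h (-x) (by omega) (by rw [abs_of_neg hx0] at hx; exact hx)]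
  · exact apply_zero_of_odd hv.1
  · exact h x hx0 (by rwa [abs_of_pos hx0] at hx)

lemma apply_pos_of_isAscent (hn : 2 ≤ n) (hv : v ∈ weylD n) (h1 : v 1 = 1)
    (hasc : ∀ i : ℤ, 2 ≤ i → i < n → IsAscent (v i) (v (i + 1)))
    (hascn : IsAscent (v (n - 1)) (-v n)) {i : ℤ} (hi : 2 ≤ i) (hin : i ≤ n) : 0 < v i := by
  obtain ⟨hodd, -, heven⟩ := hv
  have hne : ∀ x : ℤ, x ≠ 0 → v x ≠ 0 := fun x => apply_ne_zero_of_odd hodd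
  -- an ascent from a negative entry leads to a negative entry, and `hascn` forbids
  -- negative entries at both `n - 1` and `n`
  have hpos : ∀ i : ℤ, 2 ≤ i → i ≤ n - 1 → 0 < v i := by
    intro i hi2 hin
    by_contra hneg
    have hneg' : ∀ k, i ≤ k → k ≤ n → v k < 0 := by
      intro k hk
      induction k, hk using Int.leInduction with
      | base => intro _; have := hne i (by omega); omega
      | succ k hik ih =>
        intro hk
        have := ih (by omega)
        have := hasc k (by omega) (by omega)
        unfold IsAscent at this
        omega
    have := hneg' (n - 1) hin (by omega)
    have := hneg' n (by omega) le_rfl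
    unfold IsAscent at hascn
    omega
  rcases hin.lt_or_eq with hin | rfl
  · exact hpos i hi (by omega)
  -- `v n` would be the only negative entry, against the parity condition
  by_contra hneg
  suffices negCount n v = 1 from Nat.not_even_one (this ▸ heven)
  rw [negCount, card_eq_one]
  refine ⟨n, ext fun x => ?_⟩
  simp only [mem_filter, mem_Icc, mem_singleton]
  constructor
  · rintro ⟨⟨hx1, hxn⟩, hx⟩
    by_contra hxn'
    rcases hx1.eq_or_lt with rfl | hx1
    · omega
    · have := hpos x (by omega) (by omega); omega
  · rintro rfl
    have := hne n (by omega)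
    omega

lemma eq_one_of_isAscent (hn : 2 ≤ n) (hv : v ∈ weylD n) (h1 : v 1 = 1)
    (hasc : ∀ i : ℤ, 2 ≤ i → i < n → IsAscent (v i) (v (i + 1)))
    (hascn : IsAscent (v (n - 1)) (-v n)) : v = 1 := by
  have hpos := fun {i : ℤ} => apply_pos_of_isAscent hn hv h1 hasc hascn (i := i)
  have hmono : ∀ i : ℤ, 2 ≤ i → i < n → v i < v (i + 1) := by
    intro i hi hin
    have := hpos hi hin.le
    have := hpos (i := i + 1) (by omega) hin
    have := hasc i hi hin
    unfold IsAscent at this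
    omega
  have h2 : 2 ≤ v 2 := by
    have := hpos le_rfl (by omega)
    have : v 2 ≠ v 1 := fun h => absurd (v.injective h) (by decide)
    omega
  have hvn : v n ≤ n := le_of_abs_le (abs_apply_le_of_fixes hv.2.1 (by simp))
  refine eq_one_of_apply_eq_self hv fun x hx1 hxn => ?_
  rcases hx1.eq_or_lt with rfl | hx1
  · exact h1
  · exact eq_self_of_lt_succ hmono h2 hvn (by omega) hxn

lemma exists_invCount_mul_simpleRefl_lt (hn : 2 ≤ n) (hv : v ∈ weylD n) (h1 : v 1 = 1)
    (hv1 : v ≠ 1) : ∃ i, 2 ≤ i ∧ i ≤ n ∧ invCount n (v * simpleRefl n i) < invCount n v := by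
  by_contra! hno
  have hne : ∀ x : ℤ, x ≠ 0 → v x ≠ 0 := fun x => apply_ne_zero_of_odd hv.1
  refine hv1 (eq_one_of_isAscent hn hv h1 (fun i hi hin => ?_) ?_)
  · lift i to ℕ using (by omega)
    by_contra hasc
    have := invCount_mul_simpleRefl_of_lt (n := n) v (i := i) (by omega) (by omega)
    have := pairInv_swap_of_not_isAscent (hne ((i : ℤ) + 1) (by omega))
      (fun h => by have := v.injective h; omega) hasc
    have := hno i (by omega) (by omega)
    omega
  · by_contra hasc
    have := invCount_mul_simpleRefl_self hn hv.1
    have := pairInv_swap_of_not_isAscent (neg_ne_zero.mpr (hne n (by omega)))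
      (fun h => by rw [← hv.1] at h; have := v.injective h; omega) hasc
    have := hno n hn le_rfl
    omega

end Descent

lemma simpleRefl_apply_one {n i : ℕ} (hn : 3 ≤ n) (h2 : 2 ≤ i) (hi : i ≤ n) :
    simpleRefl n i 1 = 1 := by
  rcases hi.lt_or_eq with hi | rfl
  · rw [simpleRefl_apply_of_lt (by omega) hi]; split_ifs <;> omega
  · rw [simpleRefl_self_apply (by omega)]; split_ifs <;> omega

lemma mem_closure_of_apply_one {n : ℕ} (hn : 3 ≤ n) {v : Perm ℤ} (hv : v ∈ weylD n)
    (h1 : v 1 = 1) :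
    v ∈ Subgroup.closure {s : Perm ℤ | ∃ i : ℕ, 2 ≤ i ∧ i ≤ n ∧ s = simpleRefl n i} := by
  induction hk : invCount n v using Nat.strong_induction_on generalizing v with
  | _ k ih =>
  by_cases hv1 : v = 1
  · exact hv1 ▸ Subgroup.one_mem _
  obtain ⟨i, hi2, hin, hlt⟩ := exists_invCount_mul_simpleRefl_lt (by omega) hv h1 hv1
  have hvs : v * simpleRefl n i ∈ Subgroup.closure _ :=
    ih _ (hk ▸ hlt) (mul_mem hv (simpleRefl_mem_weylD (by omega) (by omega) hin))
      (by rw [Perm.mul_apply, simpleRefl_apply_one hn hi2 hin, h1]) rfl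
  simpa using mul_mem hvs (inv_mem (Subgroup.subset_closure ⟨i, hi2, hin, rfl⟩))

section ConsecutiveWords

variable {n : ℕ}

lemma wordProd_range_reverse_apply {m : ℕ} (hm : m < n) (x : ℤ) :
    wordProd n ((List.range m).reverse.map (· + 1)) x =
      if x = 1 then (m : ℤ) + 1 else if 2 ≤ x ∧ x ≤ (m : ℤ) + 1 then x - 1
      else if x = -1 then -((m : ℤ) + 1) else if -((m : ℤ) + 1) ≤ x ∧ x ≤ -2 then x + 1
      else x := by
  induction m generalizing x with
  | zero =>
    simp only [List.range_zero, List.reverse_nil, List.map_nil, wordProd, List.prod_nil,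
      Perm.one_apply]
    split_ifs <;> omega
  | succ m ih =>
    rw [List.range_succ, List.reverse_append, List.map_append, wordProd, List.map_append,
      List.prod_append]
    simp only [List.reverse_singleton, List.map_singleton, List.prod_singleton, Perm.mul_apply]
    rw [← wordProd, ih (by omega), simpleRefl_apply_of_lt (by omega) hm]
    push_cast
    split_ifs <;> omega

lemma wordProd_range_map_add_apply {j k : ℕ} (hj : 1 ≤ j) (hk : j + k ≤ n) (x : ℤ) :
    wordProd n ((List.range k).map (j + ·)) x =
      if (j : ℤ) ≤ x ∧ x < j + k then x + 1 else if x = j + k then (j : ℤ)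
      else if -((j : ℤ) + k) < x ∧ x ≤ -j then x - 1
      else if x = -((j : ℤ) + k) then -(j : ℤ) else x := by
  induction k generalizing j x with
  | zero =>
    simp only [List.range_zero, List.map_nil, wordProd, List.prod_nil, Perm.one_apply]
    split_ifs <;> omega
  | succ k ih =>
    have hlist : (List.range (k + 1)).map (j + ·) = j :: (List.range k).map ((j + 1) + ·) := by
      simp only [List.range_succ_eq_map, List.map_cons, List.map_map]
      congr 2
      funext t
      simp only [Function.comp_apply, Nat.succ_eq_add_one]
      omega
    rw [hlist, wordProd, List.map_cons, List.prod_cons, Perm.mul_apply, ← wordProd,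
      ih (by omega) (by omega), simpleRefl_apply_of_lt hj (by omega)]
    push_cast
    split_ifs <;> omega

end ConsecutiveWords

section WordU

variable {n j : ℕ}

lemma isWord_uWordPlus (hj : 1 ≤ j) (hjn : j ≤ n) : IsWord n (uWordPlus n j) := by
  intro i hi
  simp only [uWordPlus, List.mem_append, List.mem_map, List.mem_range, List.mem_singleton,
    List.mem_reverse] at hi
  rcases hi with (⟨t, ht, rfl⟩ | rfl) | ⟨t, ht, rfl⟩ <;> omega

lemma length_uWordPlus (hn : 2 ≤ n) :
    (uWordPlus n j).length = (n - 1) + (n - j) := by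
  simp only [uWordPlus, List.length_append, List.length_map, List.length_range,
    List.length_singleton, List.length_reverse]
  omega

lemma wordProd_uWordPlus_apply (hn : 2 ≤ n) (hj : 1 ≤ j) (hjn : j ≤ n) {x : ℤ} (h1 : 1 ≤ x)
    (hxn : x ≤ n) :
    wordProd n (uWordPlus n j) x =
      if x = 1 then -(j : ℤ) else if x ≤ j ∧ x ≤ n - 1 then x - 1
      else if x ≤ n - 1 then x
      else if j < n then -(n : ℤ) else -((n : ℤ) - 1) := by
  have hB : simpleRefl n n (wordProd n ((List.range (n - 2)).reverse.map (· + 1)) x)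
      = if x = 1 then -(n : ℤ) else if x ≤ n - 1 then x - 1 else -((n : ℤ) - 1) := by
    rw [wordProd_range_reverse_apply (by omega), simpleRefl_self_apply hn]
    split_ifs <;> omega
  rw [uWordPlus, wordProd, List.map_append, List.map_append, List.prod_append, List.prod_append,
    List.map_singleton, List.prod_singleton, Perm.mul_apply, Perm.mul_apply, ← wordProd,
    ← wordProd, hB, wordProd_range_map_add_apply hj (by omega)]
  split_ifs <;> omega

lemma invCount_wordProd_uWordPlus (hn : 2 ≤ n) (hj : 1 ≤ j) (hjn : j ≤ n) :
    invCount n (wordProd n (uWordPlus n j)) = (n - 1) + (n - j) := by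
  have key : ∀ p ∈ posPairs n, pairInv (wordProd n (uWordPlus n j) p.1)
      (wordProd n (uWordPlus n j) p.2)
        = (if p.1 = 1 then 1 else 0) + (if p.1 = 1 ∧ (j : ℤ) < p.2 then 1 else 0) := by
    intro p hp
    rw [mem_posPairs] at hp
    rw [wordProd_uWordPlus_apply hn hj hjn (by omega) (by omega),
      wordProd_uWordPlus_apply hn hj hjn (by omega) (by omega)]
    unfold pairInv
    split_ifs <;> omega
  have e1 : (posPairs n).filter (fun p => p.1 = 1) = {(1 : ℤ)} ×ˢ Icc 2 (n : ℤ) := by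
    ext p
    simp only [mem_filter, mem_product, mem_singleton, mem_Icc, mem_posPairs]
    omega
  have e2 : (posPairs n).filter (fun p => p.1 = 1 ∧ (j : ℤ) < p.2)
      = {(1 : ℤ)} ×ˢ Icc ((j : ℤ) + 1) n := by
    ext p
    simp only [mem_filter, mem_product, mem_singleton, mem_Icc, mem_posPairs]
    omega
  rw [invCount, sum_congr rfl key, sum_add_distrib, sum_boole, sum_boole, e1, e2, card_product,
    card_product, card_singleton, Int.card_Icc, Int.card_Icc, Nat.cast_id, Nat.cast_id]
  omega

lemma invCount_wordProd_uWordPlus_mul (hn : 3 ≤ n) (hj : 1 ≤ j) (hjn : j ≤ n) {i : ℕ}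
    (h2 : 2 ≤ i) (hi : i ≤ n) :
    invCount n (wordProd n (uWordPlus n j) * simpleRefl n i)
      = invCount n (wordProd n (uWordPlus n j)) + 1 := by
  have hu := fun (x : ℤ) (h1 : 1 ≤ x) (hxn : x ≤ n) =>
    wordProd_uWordPlus_apply (by omega) hj hjn h1 hxn
  rcases hi.lt_or_eq with hi | hi
  · have := invCount_mul_simpleRefl_of_lt (wordProd n (uWordPlus n j)) (by omega) hi
    have := pairInv_swap_of_isAscent (c := wordProd n (uWordPlus n j) i)
      (d := wordProd n (uWordPlus n j) (i + 1)) (by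
        rw [hu _ (by omega) (by omega), hu _ (by omega) (by omega)]
        unfold IsAscent
        split_ifs <;> omega)
    omega
  · rw [hi]
    have := invCount_mul_simpleRefl_self (n := n) (by omega)
      (wordProd_mem_weylD (by omega) (isWord_uWordPlus hj hjn)).1
    have := pairInv_swap_of_isAscent (c := wordProd n (uWordPlus n j) (n - 1))
      (d := -wordProd n (uWordPlus n j) n) (by
        rw [hu _ (by omega) (by omega), hu _ (by omega) le_rfl]
        unfold IsAscent
        split_ifs <;> omega)
    omega

lemma weylLength_wordProd_uWordPlus_mul (hn : 3 ≤ n) (hj : 1 ≤ j) (hjn : j ≤ n) {i : ℕ}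
    (h2 : 2 ≤ i) (hi : i ≤ n) :
    weylLength n (wordProd n (uWordPlus n j) * simpleRefl n i)
      = weylLength n (wordProd n (uWordPlus n j)) + 1 := by
  have hL := isWord_uWordPlus hj hjn
  have hLi : IsWord n (uWordPlus n j ++ [i]) := fun k hk =>
    (List.mem_append.mp hk).elim (hL k) fun hk => by
      rw [List.mem_singleton.mp hk]; exact ⟨by omega, hi⟩
  rw [← wordProd_append_singleton, weylLength_wordProd_of_invCount_eq (by omega) hLi,
    weylLength_wordProd_of_invCount_eq (by omega) hL, List.length_append, List.length_singleton]
  · rw [invCount_wordProd_uWordPlus (by omega) hj hjn, length_uWordPlus (by omega)]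
  · rw [wordProd_append_singleton, invCount_wordProd_uWordPlus_mul hn hj hjn h2 hi,
      invCount_wordProd_uWordPlus (by omega) hj hjn, List.length_append,
      length_uWordPlus (by omega), List.length_singleton]

end WordU

/-- Let `n ≥ 4`, `2 ≤ j ≤ n`, `w` a basic involution in the Weyl
group of type `Dₙ` with `w(1) = -j`, and `u = s_j s_{j+1} ⋯ s_{n-1} sₙ s_{n-2} ⋯ s₂ s₁`.
Then: (a) if `j < n` then `u(1) = -j`, `u(i) = i - 1` for `2 ≤ i ≤ j`, `u(i) = i` for
`j < i ≤ n - 1`, and `u(n) = -n`; if `j = n` then `u(1) = -n`, `u(i) = i - 1` for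
`2 ≤ i ≤ n - 1`, and `u(n) = -(n-1)`; (b) `u⁻¹ w` lies in the subgroup `W̃` generated
by `s₂, …, sₙ` (equivalently, it fixes `1`); (c) `ℓ(u sᵢ) = ℓ(u) + 1` for every
`2 ≤ i ≤ n`. -/
theorem statement14 (n : ℕ) (hn : 4 ≤ n) (j : ℕ) (hj2 : 2 ≤ j) (hjn : j ≤ n)
    (w : Equiv.Perm ℤ) (hw : IsBasicInvolution n w) (hw1 : w 1 = -(j : ℤ)) :
    ((j < n →
        wordProd n (uWordPlus n j) 1 = -(j : ℤ) ∧
        (∀ i : ℤ, 2 ≤ i → i ≤ (j : ℤ) → wordProd n (uWordPlus n j) i = i - 1) ∧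
        (∀ i : ℤ, (j : ℤ) < i → i ≤ (n : ℤ) - 1 → wordProd n (uWordPlus n j) i = i) ∧
        wordProd n (uWordPlus n j) (n : ℤ) = -(n : ℤ)) ∧
      (j = n →
        wordProd n (uWordPlus n j) 1 = -(n : ℤ) ∧
        (∀ i : ℤ, 2 ≤ i → i ≤ (n : ℤ) - 1 → wordProd n (uWordPlus n j) i = i - 1) ∧
        wordProd n (uWordPlus n j) (n : ℤ) = -((n : ℤ) - 1))) ∧
    ((wordProd n (uWordPlus n j))⁻¹ * w ∈
        Subgroup.closure {s : Equiv.Perm ℤ | ∃ i : ℕ, 2 ≤ i ∧ i ≤ n ∧ s = simpleRefl n i} ∧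
      ((wordProd n (uWordPlus n j))⁻¹ * w) 1 = 1) ∧
    (∀ i : ℕ, 2 ≤ i → i ≤ n →
      weylLength n (wordProd n (uWordPlus n j) * simpleRefl n i)
        = weylLength n (wordProd n (uWordPlus n j)) + 1) := by
  have hu := fun (x : ℤ) (h1 : 1 ≤ x) (hxn : x ≤ n) =>
    wordProd_uWordPlus_apply (by omega) (by omega) hjn h1 hxn
  have hu1 : wordProd n (uWordPlus n j) 1 = -(j : ℤ) := by rw [hu 1 le_rfl (by omega), if_pos rfl]
  have hfix : ((wordProd n (uWordPlus n j))⁻¹ * w) 1 = 1 := by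
    rw [Perm.mul_apply, hw1, ← hu1, ← Perm.mul_apply, inv_mul_cancel, Perm.one_apply]
  have hmem : (wordProd n (uWordPlus n j))⁻¹ * w ∈ weylD n :=
    mul_mem (inv_mem (wordProd_mem_weylD (by omega) (isWord_uWordPlus (by omega) hjn))) hw.1
  refine ⟨⟨fun _ => ⟨hu1, fun i _ _ => ?_, fun i _ _ => ?_, ?_⟩,
      fun _ => ⟨?_, fun i _ _ => ?_, ?_⟩⟩,
    ⟨mem_closure_of_apply_one (by omega) hmem hfix, hfix⟩,
    fun i h2 hi => weylLength_wordProd_uWordPlus_mul (by omega) (by omega) hjn h2 hi⟩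
  all_goals rw [hu _ (by omega) (by omega)]; split_ifs <;> omega
end
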